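/- arXiv:2403.19123 — 9 statements merged into one kernel-verified Lean document; each statement's English description precedes it below -/
import Mathlib

section
/- Let H be an n×n complex Hermitian matrix with eigenvalues λ_1 ≤ ... ≤ λ_n and orthonormal eigenvectors v_1,...,v_n, let u_0 ∈ ℂ^n, t ≥ 0, and let w(t,p) = Σ_{k=1}^n e^{-|p-λ_k t|} ⟨v_k, u_0⟩ v_k. Then for every real p with p > max(λ_n t, 0), one has e^p · w(t,p) = exp(tH) u_0. -/
/-!
The orthonormal eigenvectors are the columns of a unitary matrix `U` with `H U = U diag(λ)`,
so `exp(tH) = U diag(e^{λₖ t}) Uᴴ`, i.e. `exp(tH) u₀ = ∑ₖ e^{λₖ t} ⟨vₖ, u₀⟩ vₖ`. When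
`p ≥ λₖ t` for every `k` the kernel `e^{-|p - λₖ t|}` equals `e^{λₖ t - p}`, so multiplying
`w(t, p)` by `e^p` reproduces this sum term by term.
-/

open scoped BigOperators ComplexConjugate

namespace Matrix

variable {ι : Type*} [Fintype ι] [DecidableEq ι]

abbrev ofCols (v : ι → ι → ℂ) : Matrix ι ι ℂ := of fun i k => v k i

lemma ofCols_conjTranspose_mul_self (v : ι → ι → ℂ)
    (hortho : ∀ j k, ∑ i, conj (v j i) * v k i = if j = k then 1 else 0) :
    (ofCols v)ᴴ * ofCols v = 1 := by
  ext j k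
  simpa [mul_apply, one_apply] using hortho j k

lemma mul_ofCols_of_mulVec_eq_smul (A : Matrix ι ι ℂ) (v : ι → ι → ℂ) (μ : ι → ℂ)
    (heig : ∀ k, A *ᵥ v k = μ k • v k) :
    A * ofCols v = ofCols v * diagonal μ := by
  ext i k
  rw [mul_diagonal]
  simpa [mul_apply, mulVec, dotProduct, mul_comm] using congrFun (heig k) i

lemma exp_eq_of_mul_eq_mul_diagonal (A U : Matrix ι ι ℂ) (μ : ι → ℂ) (hU : Uᴴ * U = 1)
    (hAU : A * U = U * diagonal μ) :
    NormedSpace.exp A = U * diagonal (fun k => Complex.exp (μ k)) * Uᴴ := by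
  have hU' : U * Uᴴ = 1 := mul_eq_one_comm.mp hU
  have hinv : U⁻¹ = Uᴴ := inv_eq_right_inv hU'
  have hA : A = U * diagonal μ * U⁻¹ := by
    rw [← hAU, hinv, mul_assoc, hU', mul_one]
  rw [hA, exp_conj U _ ⟨⟨U, Uᴴ, hU', hU⟩, rfl⟩, exp_diagonal, hinv, Pi.exp_def]
  simp [← Complex.exp_eq_exp_ℂ]

theorem exp_mulVec_eq_sum_of_orthonormal_eigenbasis (A : Matrix ι ι ℂ) (v : ι → ι → ℂ)
    (μ : ι → ℂ) (hortho : ∀ j k, ∑ i, conj (v j i) * v k i = if j = k then 1 else 0)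
    (heig : ∀ k, A *ᵥ v k = μ k • v k) (u : ι → ℂ) :
    NormedSpace.exp A *ᵥ u = ∑ k, Complex.exp (μ k) • (∑ i, conj (v k i) * u i) • v k := by
  rw [exp_eq_of_mul_eq_mul_diagonal A _ μ (ofCols_conjTranspose_mul_self v hortho)
    (mul_ofCols_of_mulVec_eq_smul A v μ heig)]
  rw [← mulVec_mulVec, ← mulVec_mulVec]
  ext i
  simp only [mulVec, dotProduct, diagonal_apply, ite_mul, zero_mul, Finset.sum_ite_eq,
    Finset.mem_univ, if_true, Finset.sum_apply, Pi.smul_apply, smul_eq_mul, of_apply,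
    conjTranspose_apply, RCLike.star_def]
  exact Finset.sum_congr rfl fun k _ => by ring

end Matrix

open Matrix

lemma Real.exp_mul_exp_neg_abs_sub_of_le {a p : ℝ} (h : a ≤ p) :
    Real.exp p * Real.exp (-|p - a|) = Real.exp a := by
  rw [abs_of_nonneg (sub_nonneg.mpr h), ← Real.exp_add]
  ring_nf

theorem schrodingerisation_pointwise_recovery_general
    (n : ℕ) (H : Matrix (Fin (n + 1)) (Fin (n + 1)) ℂ)
    (lam : Fin (n + 1) → ℝ) (hmono : Monotone lam)
    (v : Fin (n + 1) → (Fin (n + 1) → ℂ))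
    (hortho : ∀ j k, (∑ i, conj (v j i) * v k i) = if j = k then 1 else 0)
    (heig : ∀ k, H.mulVec (v k) = (lam k : ℂ) • v k)
    (u0 : Fin (n + 1) → ℂ) (t : ℝ) (ht : 0 ≤ t)
    (w : ℝ → ℝ → (Fin (n + 1) → ℂ))
    (hw : ∀ τ p, w τ p =
      ∑ k, (Real.exp (-|p - lam k * τ|) : ℂ) • (∑ i, conj (v k i) * u0 i) • v k)
    (p : ℝ) (hp : p > max (lam (Fin.last n) * t) 0) :
    (Real.exp p : ℂ) • w t p = (NormedSpace.exp ((t : ℂ) • H)).mulVec u0 := by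
  have hle : ∀ k, lam k * t ≤ p := fun k =>
    (mul_le_mul_of_nonneg_right (hmono (Fin.le_last k)) ht).trans ((le_max_left _ _).trans hp.le)
  have heig_t : ∀ k, ((t : ℂ) • H) *ᵥ v k = ((t : ℂ) * lam k) • v k := fun k => by
    rw [smul_mulVec, heig, smul_smul]
  rw [exp_mulVec_eq_sum_of_orthonormal_eigenbasis _ v _ hortho heig_t, hw, Finset.smul_sum]
  refine Finset.sum_congr rfl fun k _ => ?_
  rw [smul_smul, ← Complex.ofReal_mul, Real.exp_mul_exp_neg_abs_sub_of_le (hle k)]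
  push_cast
  rw [mul_comm]

/-- Recovery of `exp(tH) u₀` from the Schrödingerised solution
`w(t,p) = ∑ₖ e^{-|p-λₖt|} ⟨vₖ,u₀⟩ vₖ` by pointwise evaluation at any `p > max(λₙ t, 0)`. -/
theorem schrodingerisation_pointwise_recovery
    (n : ℕ) (H : Matrix (Fin (n + 1)) (Fin (n + 1)) ℂ) (hH : H.IsHermitian)
    (lam : Fin (n + 1) → ℝ) (hmono : Monotone lam)
    (v : Fin (n + 1) → (Fin (n + 1) → ℂ))
    (hortho : ∀ j k, (∑ i, conj (v j i) * v k i) = if j = k then 1 else 0)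
    (heig : ∀ k, H.mulVec (v k) = (lam k : ℂ) • v k)
    (u0 : Fin (n + 1) → ℂ) (t : ℝ) (ht : 0 ≤ t)
    (w : ℝ → ℝ → (Fin (n + 1) → ℂ))
    (hw : ∀ τ p, w τ p =
      ∑ k, (Real.exp (-|p - lam k * τ|) : ℂ) • (∑ i, conj (v k i) * u0 i) • v k)
    (p : ℝ) (hp : p > max (lam (Fin.last n) * t) 0) :
    (Real.exp p : ℂ) • w t p = (NormedSpace.exp ((t : ℂ) • H)).mulVec u0 :=
  schrodingerisation_pointwise_recovery_general n H lam hmono v hortho heig u0 t ht w hw p hp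
end

section
/- Let H be an n×n complex Hermitian matrix with eigenvalues λ_1 ≤ ... ≤ λ_n and orthonormal eigenvectors v_1,...,v_n, let u_0 ∈ ℂ^n, t ≥ 0, and let w(t,p) = Σ_{k=1}^n e^{-|p-λ_k t|} ⟨v_k, u_0⟩ v_k. Then for every real p with p > max(λ_n t, 0), one has e^p · ∫_p^∞ w(t,q) dq = exp(tH) u_0. -/
/-!
For `q > p ≥ λₖ t` the kernel `e^{-|q - λₖ t|}` equals `e^{λₖ t - q}`, so `e^p ∫_p^∞` turns the
`k`-th mode of `w(t, ·)` into `e^{λₖ t} ⟨vₖ, u₀⟩ vₖ`. On the other side `exp(tH) vₖ = e^{tλₖ} vₖ`,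
and `u₀ = ∑ₖ ⟨vₖ, u₀⟩ vₖ` because the matrix `M` with columns `vₖ` is square with `Mᴴ M = 1`,
hence also `M Mᴴ = 1`.
-/

open scoped ComplexConjugate
open MeasureTheory Real Set Matrix

theorem exp_neg_abs_sub_eqOn_Ioi {c p : ℝ} (hc : c ≤ p) :
    EqOn (fun q => exp (-|q - c|)) (fun q => exp c * exp (-q)) (Ioi p) := by
  intro q (hq : p < q)
  show exp (-|q - c|) = exp c * exp (-q)
  rw [abs_of_nonneg (by linarith), ← exp_add]
  ring_nf

theorem integrableOn_exp_neg_abs_sub_Ioi {c p : ℝ} (hc : c ≤ p) :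
    IntegrableOn (fun q => exp (-|q - c|)) (Ioi p) :=
  IntegrableOn.congr_fun ((integrableOn_exp_neg_Ioi p).const_mul _)
    (exp_neg_abs_sub_eqOn_Ioi hc).symm measurableSet_Ioi

theorem integral_exp_neg_abs_sub_Ioi {c p : ℝ} (hc : c ≤ p) :
    ∫ q in Ioi p, exp (-|q - c|) = exp (c - p) := by
  rw [setIntegral_congr_fun measurableSet_Ioi (exp_neg_abs_sub_eqOn_Ioi hc), integral_const_mul,
    integral_exp_neg_Ioi, ← exp_add, sub_eq_add_neg]

theorem exp_smul_integral_Ioi_sum_exp_neg_abs_sub_smul {ι E : Type*} [Fintype ι]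
    [NormedAddCommGroup E] [NormedSpace ℝ E] [CompleteSpace E] {c : ι → ℝ} {p : ℝ}
    (hc : ∀ k, c k ≤ p) (x : ι → E) :
    exp p • ∫ q in Ioi p, ∑ k, exp (-|q - c k|) • x k = ∑ k, exp (c k) • x k := by
  rw [integral_finsetSum _ fun k _ => (integrableOn_exp_neg_abs_sub_Ioi (hc k)).smul_const _,
    Finset.smul_sum]
  refine Finset.sum_congr rfl fun k _ => ?_
  rw [integral_smul_const, integral_exp_neg_abs_sub_Ioi (hc k), smul_smul, ← exp_add,
    add_sub_cancel]

theorem sum_star_mul_smul_eq_self_of_orthonormal {R m : Type*} [CommRing R] [StarRing R]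
    [Fintype m] [DecidableEq m] {v : m → m → R}
    (hv : ∀ j k, ∑ i, star (v j i) * v k i = if j = k then 1 else 0) (u : m → R) :
    ∑ k, (∑ i, star (v k i) * u i) • v k = u := by
  set M : Matrix m m R := Matrix.of fun i k => v k i
  have hMM : Mᴴ * M = 1 := by
    ext j k
    simpa only [M, mul_apply, conjTranspose_apply, of_apply, one_apply] using hv j k
  calc ∑ k, (∑ i, star (v k i) * u i) • v k = M *ᵥ (Mᴴ *ᵥ u) := by
        ext i
        simp only [M, mul_comm, Finset.sum_apply, Pi.smul_apply, smul_eq_mul, mulVec, dotProduct,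
          of_apply, conjTranspose_apply]
    _ = u := by rw [mulVec_mulVec, mul_eq_one_comm.mp hMM, one_mulVec]

-- The operator norm makes `Matrix m m 𝕂` a complete normed algebra, so the exponential series
-- of `A` has a sum to push through `· *ᵥ x`.
open scoped Norms.Operator in
theorem Matrix.exp_mulVec_of_mulVec_eq_smul {𝕂 m : Type*} [RCLike 𝕂] [Fintype m]
    [DecidableEq m] {A : Matrix m m 𝕂} {x : m → 𝕂} {μ : 𝕂} (h : A *ᵥ x = μ • x) :
    NormedSpace.exp A *ᵥ x = NormedSpace.exp μ • x := by
  have hpow (n : ℕ) : A ^ n *ᵥ x = μ ^ n • x := by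
    induction n with
    | zero => simp
    | succ n ih => rw [pow_succ', ← mulVec_mulVec, ih, mulVec_smul, h, smul_smul, pow_succ]
  have hA := (NormedSpace.exp_series_hasSum_exp' (𝕂 := 𝕂) A).map (mulVec.addMonoidHomLeft x)
    (continuous_id.matrix_mulVec continuous_const)
  refine hA.unique ?_
  simpa [Function.comp_def, mulVec.addMonoidHomLeft, smul_mulVec, hpow, smul_smul] using
    (NormedSpace.exp_series_hasSum_exp' (𝕂 := 𝕂) μ).smul_const x

theorem schrodingerisation_integral_recovery_general
    (n : ℕ) (H : Matrix (Fin (n + 1)) (Fin (n + 1)) ℂ)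
    (lam : Fin (n + 1) → ℝ) (hmono : Monotone lam)
    (v : Fin (n + 1) → (Fin (n + 1) → ℂ))
    (hortho : ∀ j k, (∑ i, conj (v j i) * v k i) = if j = k then 1 else 0)
    (heig : ∀ k, H.mulVec (v k) = (lam k : ℂ) • v k)
    (u0 : Fin (n + 1) → ℂ) (t : ℝ) (ht : 0 ≤ t)
    (w : ℝ → ℝ → (Fin (n + 1) → ℂ))
    (hw : ∀ τ p, w τ p =
      ∑ k, (Real.exp (-|p - lam k * τ|) : ℂ) • (∑ i, conj (v k i) * u0 i) • v k)
    (p : ℝ) (hp : p > max (lam (Fin.last n) * t) 0) :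
    (Real.exp p : ℂ) • (∫ q in Set.Ioi p, w t q) =
      (NormedSpace.exp ((t : ℂ) • H)).mulVec u0 := by
  set c : Fin (n + 1) → ℂ := fun k => ∑ i, conj (v k i) * u0 i
  have hlt (k : Fin (n + 1)) : lam k * t ≤ p :=
    (mul_le_mul_of_nonneg_right (hmono (Fin.le_last k)) ht).trans ((le_max_left _ _).trans hp.le)
  have hexp (k : Fin (n + 1)) :
      NormedSpace.exp ((t : ℂ) • H) *ᵥ v k = exp (lam k * t) • v k := by
    have hk : ((t : ℂ) • H) *ᵥ v k = ((lam k * t : ℝ) : ℂ) • v k := by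
      rw [smul_mulVec, heig, smul_smul, Complex.ofReal_mul, mul_comm]
    rw [exp_mulVec_of_mulVec_eq_smul hk, ← Complex.exp_eq_exp_ℂ, ← Complex.ofReal_exp,
      Complex.coe_smul]
  calc (exp p : ℂ) • ∫ q in Ioi p, w t q
      = exp p • ∫ q in Ioi p, ∑ k, exp (-|q - lam k * t|) • c k • v k := by
        simp only [hw, Complex.coe_smul, c]
    _ = ∑ k, exp (lam k * t) • c k • v k := exp_smul_integral_Ioi_sum_exp_neg_abs_sub_smul hlt _
    _ = NormedSpace.exp ((t : ℂ) • H) *ᵥ ∑ k, c k • v k := by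
        simp only [mulVec_sum, mulVec_smul, hexp, smul_comm (c _)]
    _ = NormedSpace.exp ((t : ℂ) • H) *ᵥ u0 := by
        congr 1
        exact sum_star_mul_smul_eq_self_of_orthonormal hortho u0

/-- Recovery of `exp(tH) u₀` from the Schrödingerised solution
`w(t,p) = ∑ₖ e^{-|p-λₖt|} ⟨vₖ,u₀⟩ vₖ` by integration over `(p, ∞)` for any
`p > max(λₙ t, 0)`. -/
theorem schrodingerisation_integral_recovery
    (n : ℕ) (H : Matrix (Fin (n + 1)) (Fin (n + 1)) ℂ) (hH : H.IsHermitian)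
    (lam : Fin (n + 1) → ℝ) (hmono : Monotone lam)
    (v : Fin (n + 1) → (Fin (n + 1) → ℂ))
    (hortho : ∀ j k, (∑ i, conj (v j i) * v k i) = if j = k then 1 else 0)
    (heig : ∀ k, H.mulVec (v k) = (lam k : ℂ) • v k)
    (u0 : Fin (n + 1) → ℂ) (t : ℝ) (ht : 0 ≤ t)
    (w : ℝ → ℝ → (Fin (n + 1) → ℂ))
    (hw : ∀ τ p, w τ p =
      ∑ k, (Real.exp (-|p - lam k * τ|) : ℂ) • (∑ i, conj (v k i) * u0 i) • v k)
    (p : ℝ) (hp : p > max (lam (Fin.last n) * t) 0) :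
    (Real.exp p : ℂ) • (∫ q in Set.Ioi p, w t q) =
      (NormedSpace.exp ((t : ℂ) • H)).mulVec u0 :=
  schrodingerisation_integral_recovery_general n H lam hmono v hortho heig u0 t ht w hw p hp
end

section
/- Let H be an n×n complex Hermitian matrix with eigenvalues λ_1 ≤ ... ≤ λ_n and orthonormal eigenvectors v_1,...,v_n, let u_0 ∈ ℂ^n, t ≥ 0, and let w(t,p) = Σ_{k=1}^n e^{-|p-λ_k t|} ⟨v_k, u_0⟩ v_k. Then for all real p, P with max(λ_n t, 0) < p < P, one has (1/(e^{-p} - e^{-P})) · ∫_p^P w(t,q) dq = exp(tH) u_0. -/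
/-!
For `q ≥ p > λₖ t` the kernel is one-sided, `e^{-|q - λₖ t|} = e^{λₖ t} e^{-q}`, so integrating
over `[p, P]` multiplies the `k`-th eigencomponent of `u₀` by `e^{λₖ t} (e^{-p} - e^{-P})`. After
dividing by `e^{-p} - e^{-P}` what remains is the eigen-expansion of `u₀` with each `vₖ` scaled by
`e^{λₖ t}`, which is `exp(tH) u₀` because the exponential series acts on an eigenvector through
its eigenvalue.
-/

open scoped ComplexConjugate Matrix

namespace Matrix

theorem pow_mulVec_of_mulVec_eq_smul {m R : Type*} [Fintype m] [DecidableEq m] [CommRing R]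
    {A : Matrix m m R} {x : m → R} {μ : R} (hx : A *ᵥ x = μ • x) (k : ℕ) :
    (A ^ k) *ᵥ x = μ ^ k • x := by
  induction k with
  | zero => simp
  | succ k ih =>
    rw [pow_succ', ← mulVec_mulVec, ih, mulVec_smul, hx, smul_smul, ← pow_succ]

theorem exp_mulVec_of_mulVec_eq_smul_s2 {m 𝕂 : Type*} [Fintype m] [DecidableEq m] [RCLike 𝕂]
    {A : Matrix m m 𝕂} {x : m → 𝕂} {μ : 𝕂} (hx : A *ᵥ x = μ • x) :
    NormedSpace.exp A *ᵥ x = NormedSpace.exp μ • x := by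
  have hA : Summable fun k : ℕ => ((k.factorial)⁻¹ : 𝕂) • A ^ k :=
    open scoped Norms.Operator in NormedSpace.expSeries_summable' A
  have hAx := hA.hasSum.map (mulVec.addMonoidHomLeft x)
    (continuous_id.matrix_mulVec continuous_const)
  have hμx := (NormedSpace.expSeries_summable' (𝕂 := 𝕂) μ).hasSum.smul_const x
  rw [NormedSpace.exp_eq_tsum 𝕂, NormedSpace.exp_eq_tsum 𝕂]
  refine hAx.unique ?_
  convert hμx using 2 with k
  simp [mulVec.addMonoidHomLeft, smul_mulVec, pow_mulVec_of_mulVec_eq_smul hx, smul_smul]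

end Matrix

theorem sum_inner_smul_eq_self_of_orthonormal {m R : Type*} [Fintype m] [DecidableEq m]
    [CommRing R] [StarRing R] (v : m → m → R)
    (hv : ∀ j k, ∑ i, conj (v j i) * v k i = if j = k then 1 else 0) (u : m → R) :
    ∑ k, (∑ i, conj (v k i) * u i) • v k = u := by
  set V : Matrix m m R := Matrix.of fun i k => v k i
  have hVV : Vᴴ * V = 1 := by
    ext j k
    simpa [V, Matrix.mul_apply, Matrix.one_apply, starRingEnd_apply] using hv j k
  have hu : V *ᵥ (Vᴴ *ᵥ u) = u := by
    rw [Matrix.mulVec_mulVec, mul_eq_one_comm.mp hVV, Matrix.one_mulVec]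
  ext i
  rw [← congrFun hu i]
  simp [V, Matrix.mulVec, dotProduct, Finset.sum_apply, mul_comm, starRingEnd_apply]

theorem integral_exp_neg_abs_sub_of_le {a p P : ℝ} (ha : a ≤ p) (hpP : p ≤ P) :
    ∫ q in p..P, Real.exp (-|q - a|) = Real.exp a * (Real.exp (-p) - Real.exp (-P)) := by
  have hq : Set.EqOn (fun q => Real.exp (-|q - a|)) (fun q => Real.exp (a - q))
      (Set.uIcc p P) := by
    intro q hq
    rw [Set.uIcc_of_le hpP] at hq
    simp only [abs_of_nonneg (sub_nonneg.mpr (ha.trans hq.1)), neg_sub]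
  rw [intervalIntegral.integral_congr hq,
    intervalIntegral.integral_comp_sub_left (fun x => Real.exp x), integral_exp, mul_sub,
    ← Real.exp_add, ← Real.exp_add, ← sub_eq_add_neg, ← sub_eq_add_neg]

theorem integral_sum_exp_neg_abs_sub_smul {ι E : Type*} [Fintype ι] [NormedAddCommGroup E]
    [NormedSpace ℂ E] [CompleteSpace E] (a : ι → ℝ) (x : ι → E) {p P : ℝ} (ha : ∀ k, a k ≤ p)
    (hpP : p ≤ P) :
    ∫ q in p..P, ∑ k, (Real.exp (-|q - a k|) : ℂ) • x k =
      (Real.exp (-p) - Real.exp (-P)) • ∑ k, (Real.exp (a k) : ℂ) • x k := by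
  rw [intervalIntegral.integral_finsetSum
      fun k _ => (by fun_prop : Continuous _).intervalIntegrable p P, Finset.smul_sum]
  refine Finset.sum_congr rfl fun k _ => ?_
  rw [intervalIntegral.integral_smul_const, intervalIntegral.integral_ofReal,
    integral_exp_neg_abs_sub_of_le (ha k) hpP, ← smul_assoc]
  congr 1
  simp [Complex.real_smul, mul_comm]

theorem schrodingerisation_finite_integral_recovery_general
    (n : ℕ) (H : Matrix (Fin (n + 1)) (Fin (n + 1)) ℂ)
    (lam : Fin (n + 1) → ℝ) (hmono : Monotone lam)
    (v : Fin (n + 1) → (Fin (n + 1) → ℂ))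
    (hortho : ∀ j k, (∑ i, conj (v j i) * v k i) = if j = k then 1 else 0)
    (heig : ∀ k, H.mulVec (v k) = (lam k : ℂ) • v k)
    (u0 : Fin (n + 1) → ℂ) (t : ℝ) (ht : 0 ≤ t)
    (w : ℝ → ℝ → (Fin (n + 1) → ℂ))
    (hw : ∀ τ p, w τ p =
      ∑ k, (Real.exp (-|p - lam k * τ|) : ℂ) • (∑ i, conj (v k i) * u0 i) • v k)
    (p P : ℝ) (hp : max (lam (Fin.last n) * t) 0 < p) (hpP : p < P) :
    ((1 : ℝ) / (Real.exp (-p) - Real.exp (-P))) • (∫ q in p..P, w t q) =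
      (NormedSpace.exp ((t : ℂ) • H)).mulVec u0 := by
  have hlam : ∀ k, lam k * t ≤ p := fun k =>
    (mul_le_mul_of_nonneg_right (hmono (Fin.le_last k)) ht).trans
      ((le_max_left _ _).trans hp.le)
  have hne : Real.exp (-p) - Real.exp (-P) ≠ 0 :=
    sub_ne_zero.mpr (Real.exp_lt_exp.mpr (neg_lt_neg hpP)).ne'
  have hexp : ∀ k, NormedSpace.exp ((t : ℂ) • H) *ᵥ v k = (Real.exp (lam k * t) : ℂ) • v k := by
    intro k
    refine (Matrix.exp_mulVec_of_mulVec_eq_smul_s2 (A := (t : ℂ) • H) (μ := t * lam k) ?_).trans ?_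
    · rw [Matrix.smul_mulVec, heig k, smul_smul]
    · rw [← Complex.exp_eq_exp_ℂ, Complex.ofReal_exp]
      push_cast
      rw [mul_comm]
  simp only [hw]
  rw [integral_sum_exp_neg_abs_sub_smul _ _ hlam hpP.le, smul_smul, one_div,
    inv_mul_cancel₀ hne, one_smul]
  conv_rhs => rw [← sum_inner_smul_eq_self_of_orthonormal v hortho u0]
  simp only [Matrix.mulVec_sum, Matrix.mulVec_smul, hexp]
  exact Finset.sum_congr rfl fun k _ => smul_comm _ _ _

/-- Finite-domain integral recovery of `exp(tH) u₀` from the Schrödingerised solution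
`w(t,p) = ∑ₖ e^{-|p-λₖt|} ⟨vₖ,u₀⟩ vₖ`:
`(e^{-p} - e^{-P})⁻¹ ∫_p^P w(t,q) dq = exp(tH) u₀` for `max(λₙt,0) < p < P`. -/
theorem schrodingerisation_finite_integral_recovery
    (n : ℕ) (H : Matrix (Fin (n + 1)) (Fin (n + 1)) ℂ) (hH : H.IsHermitian)
    (lam : Fin (n + 1) → ℝ) (hmono : Monotone lam)
    (v : Fin (n + 1) → (Fin (n + 1) → ℂ))
    (hortho : ∀ j k, (∑ i, conj (v j i) * v k i) = if j = k then 1 else 0)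
    (heig : ∀ k, H.mulVec (v k) = (lam k : ℂ) • v k)
    (u0 : Fin (n + 1) → ℂ) (t : ℝ) (ht : 0 ≤ t)
    (w : ℝ → ℝ → (Fin (n + 1) → ℂ))
    (hw : ∀ τ p, w τ p =
      ∑ k, (Real.exp (-|p - lam k * τ|) : ℂ) • (∑ i, conj (v k i) * u0 i) • v k)
    (p P : ℝ) (hp : max (lam (Fin.last n) * t) 0 < p) (hpP : p < P) :
    ((1 : ℝ) / (Real.exp (-p) - Real.exp (-P))) • (∫ q in p..P, w t q) =
      (NormedSpace.exp ((t : ℂ) • H)).mulVec u0 :=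
  schrodingerisation_finite_integral_recovery_general n H lam hmono v hortho heig u0 t ht w hw p P
    hp hpP
end

section
/- Let s > 0, T > 0, 0 ≤ t ≤ T, η_max > 0, ζ_0 ≥ 0, and let f, h : ℝ → ℂ be measurable with δ := (∫_{|η|>η_max} (1+η²)^s |f(η)|² dη)^{1/2} < ∞ and (∫_ℝ |h(η) - e^{-η²T} f(η)|² dη)^{1/2} ≤ ζ_0. Let χ(η) = 1 for |η| ≤ η_max and χ(η) = 0 otherwise. Then (∫_ℝ | e^{-η²t} f(η) - e^{η²(T-t)} h(η) χ(η) |² dη)^{1/2} ≤ e^{-η_max² t} δ / η_max^s + e^{η_max²(T-t)} ζ_0, and in particular this is at most δ / η_max^s + e^{η_max² T} ζ_0. -/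
open MeasureTheory

/-! The error splits along `|η| = ηmax`. Above the cut-off the approximation vanishes and the
error is the decayed datum `e^{-η²t} f`, which is at most `e^{-ηmax² t} ηmax^{-s}` times the
`H^s` weight `(1 + η²)^{s/2} |f|`. Below it the error is `e^{η²(T-t)}` times the measurement
noise `h - e^{-η²T} f`, and that factor is at most `e^{ηmax²(T-t)}`. Minkowski's inequality in
`L²` adds up the two bounds. -/

section L2

variable {α : Type*} {m : MeasurableSpace α} {μ : Measure α}
  {E F G : Type*} [NormedAddCommGroup E] [NormedAddCommGroup F] [NormedAddCommGroup G]

theorem MeasureTheory.MemLp.eLpNorm_two_eq_ofReal_sqrt {g : α → E} (hg : MemLp g 2 μ) :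
    eLpNorm g 2 μ = ENNReal.ofReal (√(∫ x, ‖g x‖ ^ 2 ∂μ)) := by
  rw [hg.eLpNorm_eq_integral_rpow_norm two_ne_zero ENNReal.ofNat_ne_top, Real.sqrt_eq_rpow]
  norm_num

theorem sqrt_integral_norm_sq_le_of_ae_norm_le {g : α → E} {a : α → F} {b : α → G} {c d : ℝ}
    (hg : AEStronglyMeasurable g μ) (ha : MemLp a 2 μ) (hb : MemLp b 2 μ)
    (hc : 0 ≤ c) (hd : 0 ≤ d) (hle : ∀ᵐ x ∂μ, ‖g x‖ ≤ c * ‖a x‖ + d * ‖b x‖) :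
    √(∫ x, ‖g x‖ ^ 2 ∂μ) ≤ c * √(∫ x, ‖a x‖ ^ 2 ∂μ) + d * √(∫ x, ‖b x‖ ^ 2 ∂μ) := by
  have hca : MemLp (fun x => c * ‖a x‖) 2 μ := ha.norm.const_mul c
  have hdb : MemLp (fun x => d * ‖b x‖) 2 μ := hb.norm.const_mul d
  have hgL2 : MemLp g 2 μ :=
    (hca.add hdb).of_le hg (hle.mono fun x hx => hx.trans (Real.le_norm_self _))
  have hnorm : eLpNorm g 2 μ ≤ ENNReal.ofReal c * eLpNorm a 2 μ + ENNReal.ofReal d * eLpNorm b 2 μ :=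
    calc eLpNorm g 2 μ ≤ eLpNorm (fun x => c * ‖a x‖ + d * ‖b x‖) 2 μ := eLpNorm_mono_ae_real hle
      _ ≤ eLpNorm (fun x => c * ‖a x‖) 2 μ + eLpNorm (fun x => d * ‖b x‖) 2 μ :=
        eLpNorm_add_le hca.1 hdb.1 one_le_two
      _ = ENNReal.ofReal c * eLpNorm a 2 μ + ENNReal.ofReal d * eLpNorm b 2 μ := by
        rw [← Real.enorm_eq_ofReal hc, ← Real.enorm_eq_ofReal hd, ← eLpNorm_norm a,
          ← eLpNorm_norm b]
        exact congr_arg₂ (· + ·) (eLpNorm_const_smul c _ 2 μ) (eLpNorm_const_smul d _ 2 μ)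
  rw [hgL2.eLpNorm_two_eq_ofReal_sqrt, ha.eLpNorm_two_eq_ofReal_sqrt,
    hb.eLpNorm_two_eq_ofReal_sqrt, ← ENNReal.ofReal_mul hc, ← ENNReal.ofReal_mul hd,
    ← ENNReal.ofReal_add (by positivity) (by positivity)] at hnorm
  exact (ENNReal.ofReal_le_ofReal_iff (by positivity)).mp hnorm

variable {s : Set α} {w : α → ℝ}

theorem sq_norm_indicator_sqrt (hw : ∀ x ∈ s, 0 ≤ w x) (x : α) :
    ‖s.indicator (fun x => √(w x)) x‖ ^ 2 = s.indicator w x := by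
  by_cases hx : x ∈ s
  · simp [hx, Real.sq_sqrt (hw x hx)]
  · simp [hx]

theorem memLp_two_indicator_sqrt (hs : MeasurableSet s) (hwi : IntegrableOn w s μ)
    (hw : ∀ x ∈ s, 0 ≤ w x) : MemLp (s.indicator fun x => √(w x)) 2 μ := by
  have hm : AEStronglyMeasurable (s.indicator fun x => √(w x)) μ :=
    (aestronglyMeasurable_indicator_iff hs).mpr
      (Real.continuous_sqrt.comp_aestronglyMeasurable hwi.aestronglyMeasurable)
  rw [memLp_two_iff_integrable_sq_norm hm]
  simp only [sq_norm_indicator_sqrt hw]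
  exact hwi.integrable_indicator hs

theorem integral_sq_norm_indicator_sqrt (hs : MeasurableSet s) (hw : ∀ x ∈ s, 0 ≤ w x) :
    ∫ x, ‖s.indicator (fun x => √(w x)) x‖ ^ 2 ∂μ = ∫ x in s, w x ∂μ := by
  simp only [sq_norm_indicator_sqrt hw]
  exact integral_indicator hs

end L2

theorem Real.rpow_le_sqrt_one_add_sq_rpow {a η s : ℝ} (ha : 0 ≤ a) (haη : a ≤ |η|)
    (hs : 0 ≤ s) : a ^ s ≤ √((1 + η ^ 2) ^ s) := by
  rw [Real.le_sqrt (by positivity) (by positivity), sq, ← Real.mul_rpow ha ha]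
  exact Real.rpow_le_rpow (by positivity)
    (by nlinarith [abs_mul_abs_self η, abs_nonneg η]) hs

theorem exp_neg_sq_mul_le_of_lt_abs {s t a η r : ℝ} (hs : 0 ≤ s) (ht : 0 ≤ t) (ha : 0 < a)
    (haη : a < |η|) (hr : 0 ≤ r) :
    Real.exp (-η ^ 2 * t) * r ≤
      Real.exp (-a ^ 2 * t) / a ^ s * √((1 + η ^ 2) ^ s * r ^ 2) := by
  have hsq : a ^ 2 ≤ η ^ 2 := by rw [← sq_abs η]; gcongr
  have hexp : Real.exp (-η ^ 2 * t) ≤ Real.exp (-a ^ 2 * t) :=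
    Real.exp_le_exp.mpr (by nlinarith [mul_le_mul_of_nonneg_right hsq ht])
  have hpow := Real.rpow_le_sqrt_one_add_sq_rpow ha.le haη.le hs
  have has : 0 < a ^ s := Real.rpow_pos_of_pos ha s
  rw [Real.sqrt_mul' _ (sq_nonneg r), Real.sqrt_sq hr, div_mul_eq_mul_div, le_div_iff₀ has]
  calc Real.exp (-η ^ 2 * t) * r * a ^ s = Real.exp (-η ^ 2 * t) * a ^ s * r := by ring
    _ ≤ Real.exp (-a ^ 2 * t) * √((1 + η ^ 2) ^ s) * r := by gcongr
    _ = _ := by ring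

theorem norm_exp_mul_sub_exp_mul_le_of_abs_le {t T a η : ℝ} (htT : t ≤ T) (hηa : |η| ≤ a)
    (z y : ℂ) :
    ‖(Real.exp (-η ^ 2 * t) : ℂ) * z - (Real.exp (η ^ 2 * (T - t)) : ℂ) * y‖ ≤
      Real.exp (a ^ 2 * (T - t)) * ‖y - (Real.exp (-η ^ 2 * T) : ℂ) * z‖ := by
  have hsplit : Real.exp (-η ^ 2 * t) = Real.exp (η ^ 2 * (T - t)) * Real.exp (-η ^ 2 * T) := by
    rw [← Real.exp_add]; ring_nf
  have hrw : (Real.exp (-η ^ 2 * t) : ℂ) * z - (Real.exp (η ^ 2 * (T - t)) : ℂ) * y =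
      -((Real.exp (η ^ 2 * (T - t)) : ℂ) * (y - (Real.exp (-η ^ 2 * T) : ℂ) * z)) := by
    rw [hsplit]; push_cast; ring
  have hsq : η ^ 2 ≤ a ^ 2 := by rw [← sq_abs η]; gcongr
  rw [hrw, norm_neg, norm_mul, Complex.norm_real, Real.norm_of_nonneg (Real.exp_pos _).le]
  exact mul_le_mul_of_nonneg_right
    (Real.exp_le_exp.mpr (mul_le_mul_of_nonneg_right hsq (sub_nonneg.mpr htT))) (norm_nonneg _)

theorem norm_truncated_backward_heat_error_le {s t T a : ℝ} (hs : 0 ≤ s) (ht : 0 ≤ t)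
    (htT : t ≤ T) (ha : 0 < a) {f h χ : ℝ → ℂ} (hχ : ∀ η, χ η = if |η| ≤ a then 1 else 0)
    (η : ℝ) :
    ‖(Real.exp (-η ^ 2 * t) : ℂ) * f η - (Real.exp (η ^ 2 * (T - t)) : ℂ) * h η * χ η‖ ≤
      Real.exp (-a ^ 2 * t) / a ^ s *
          ‖{η | a < |η|}.indicator (fun η => √((1 + η ^ 2) ^ s * ‖f η‖ ^ 2)) η‖ +
        Real.exp (a ^ 2 * (T - t)) * ‖h η - (Real.exp (-η ^ 2 * T) : ℂ) * f η‖ := by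
  rw [hχ η]
  by_cases hη : a < |η|
  · rw [Set.indicator_of_mem (show η ∈ {η | a < |η|} from hη), if_neg (not_le.mpr hη),
      mul_zero, sub_zero, norm_mul, Complex.norm_real, Real.norm_of_nonneg (Real.exp_pos _).le,
      Real.norm_of_nonneg (Real.sqrt_nonneg _)]
    exact (exp_neg_sq_mul_le_of_lt_abs hs ht ha hη (norm_nonneg _)).trans
      (le_add_of_nonneg_right (by positivity))
  · rw [Set.indicator_of_notMem (show η ∉ {η | a < |η|} from hη), if_pos (not_lt.mp hη),
      mul_one, norm_zero, mul_zero, zero_add]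
    exact norm_exp_mul_sub_exp_mul_le_of_abs_le htT (not_lt.mp hη) _ _

theorem backward_heat_noisy_recovery_error_general
    (s T t ηmax ζ0 : ℝ) (hs : 0 < s) (ht0 : 0 ≤ t) (htT : t ≤ T)
    (hηmax : 0 < ηmax)
    (f h : ℝ → ℂ) (hf : Measurable f) (hh : Measurable h)
    (hfin : IntegrableOn (fun η : ℝ => (1 + η ^ 2) ^ s * ‖f η‖ ^ 2)
      {η : ℝ | ηmax < |η|})
    (δ : ℝ)
    (hδ : δ = Real.sqrt (∫ η in {η : ℝ | ηmax < |η|}, (1 + η ^ 2) ^ s * ‖f η‖ ^ 2))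
    (hnoise_int : Integrable (fun η : ℝ => ‖h η - (Real.exp (-η ^ 2 * T) : ℂ) * f η‖ ^ 2))
    (hnoise : Real.sqrt (∫ η : ℝ, ‖h η - (Real.exp (-η ^ 2 * T) : ℂ) * f η‖ ^ 2) ≤ ζ0)
    (χ : ℝ → ℂ) (hχ : ∀ η, χ η = if |η| ≤ ηmax then 1 else 0) :
    Real.sqrt (∫ η : ℝ,
        ‖(Real.exp (-η ^ 2 * t) : ℂ) * f η
          - (Real.exp (η ^ 2 * (T - t)) : ℂ) * h η * χ η‖ ^ 2) ≤
      Real.exp (-ηmax ^ 2 * t) * δ / ηmax ^ s + Real.exp (ηmax ^ 2 * (T - t)) * ζ0 ∧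
    Real.sqrt (∫ η : ℝ,
        ‖(Real.exp (-η ^ 2 * t) : ℂ) * f η
          - (Real.exp (η ^ 2 * (T - t)) : ℂ) * h η * χ η‖ ^ 2) ≤
      δ / ηmax ^ s + Real.exp (ηmax ^ 2 * T) * ζ0 := by
  set S : Set ℝ := {η | ηmax < |η|}
  have hS : MeasurableSet S := measurableSet_lt measurable_const measurable_abs
  have hw : ∀ η ∈ S, 0 ≤ (1 + η ^ 2) ^ s * ‖f η‖ ^ 2 := fun η _ => by positivity
  have hχm : Measurable χ := by
    rw [funext hχ]
    exact Measurable.ite (measurableSet_le measurable_abs measurable_const)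
      measurable_const measurable_const
  have hnoiseL2 : MemLp (fun η => h η - (Real.exp (-η ^ 2 * T) : ℂ) * f η) 2 volume :=
    (memLp_two_iff_integrable_sq_norm (by fun_prop)).mpr hnoise_int
  have hbound := sqrt_integral_norm_sq_le_of_ae_norm_le (by fun_prop)
    (memLp_two_indicator_sqrt hS hfin hw) hnoiseL2 (by positivity) (by positivity)
    (ae_of_all _ (norm_truncated_backward_heat_error_le hs.le ht0 htT hηmax hχ))
  rw [integral_sq_norm_indicator_sqrt hS hw, ← hδ] at hbound
  have hfirst :
      _ ≤ Real.exp (-ηmax ^ 2 * t) * δ / ηmax ^ s + Real.exp (ηmax ^ 2 * (T - t)) * ζ0 :=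
    hbound.trans (by rw [div_mul_eq_mul_div]; gcongr)
  refine ⟨hfirst, hfirst.trans ?_⟩
  have hζ0 : 0 ≤ ζ0 := (Real.sqrt_nonneg _).trans hnoise
  have hδ0 : 0 ≤ δ := hδ ▸ Real.sqrt_nonneg _
  gcongr
  · exact mul_le_of_le_one_left hδ0 (Real.exp_le_one_iff.mpr (by nlinarith))
  · nlinarith

/-- Theorem 3.2 of the paper (Fourier-side form): recovery error with noisy final data.
`f` is the Fourier transform of the initial data `u₀`, `h` that of the noisy measured
final data `u_T^ζ`; `e^{-η²t} f(η)` is the exact solution and `e^{η²(T-t)} h(η) χ(η)`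
the truncated approximation reconstructed from the noisy data. -/
theorem backward_heat_noisy_recovery_error
    (s T t ηmax ζ0 : ℝ) (hs : 0 < s) (hT : 0 < T) (ht0 : 0 ≤ t) (htT : t ≤ T)
    (hηmax : 0 < ηmax) (hζ0 : 0 ≤ ζ0)
    (f h : ℝ → ℂ) (hf : Measurable f) (hh : Measurable h)
    (hfin : IntegrableOn (fun η : ℝ => (1 + η ^ 2) ^ s * ‖f η‖ ^ 2)
      {η : ℝ | ηmax < |η|})
    (δ : ℝ)
    (hδ : δ = Real.sqrt (∫ η in {η : ℝ | ηmax < |η|}, (1 + η ^ 2) ^ s * ‖f η‖ ^ 2))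
    (hnoise_int : Integrable (fun η : ℝ => ‖h η - (Real.exp (-η ^ 2 * T) : ℂ) * f η‖ ^ 2))
    (hnoise : Real.sqrt (∫ η : ℝ, ‖h η - (Real.exp (-η ^ 2 * T) : ℂ) * f η‖ ^ 2) ≤ ζ0)
    (χ : ℝ → ℂ) (hχ : ∀ η, χ η = if |η| ≤ ηmax then 1 else 0) :
    Real.sqrt (∫ η : ℝ,
        ‖(Real.exp (-η ^ 2 * t) : ℂ) * f η
          - (Real.exp (η ^ 2 * (T - t)) : ℂ) * h η * χ η‖ ^ 2) ≤
      Real.exp (-ηmax ^ 2 * t) * δ / ηmax ^ s + Real.exp (ηmax ^ 2 * (T - t)) * ζ0 ∧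
    Real.sqrt (∫ η : ℝ,
        ‖(Real.exp (-η ^ 2 * t) : ℂ) * f η
          - (Real.exp (η ^ 2 * (T - t)) : ℂ) * h η * χ η‖ ^ 2) ≤
      δ / ηmax ^ s + Real.exp (ηmax ^ 2 * T) * ζ0 :=
  backward_heat_noisy_recovery_error_general s T t ηmax ζ0 hs ht0 htT hηmax f h hf hh hfin δ hδ
    hnoise_int hnoise χ hχ
end

section
/- Let L > 0 and let G : ℝ → ℝ be the 2πL-periodic function with G(p) = e^{-|p-2mπL|} for (2m-1)πL ≤ p < (2m+1)πL, m ∈ ℤ. Let T > 0, η_max > 0 with πL > 3 η_max² T, ε ≥ 0, and let f : ℝ → ℂ be measurable with ∫_ℝ |f(η)|² dη < ∞ and ∫_{|η| > √3 η_max} e^{2η²T} |f(η)|² dη ≤ ε². Then ∫_0^T ∫_ℝ η² | e^{-| -πL + η²(t-T) |} - G(-πL + η²(t-T)) |² |f(η)|² dη dt ≤ (5/2) e^{-2(πL - 3η_max²T)} ∫_ℝ |f(η)|² dη + e^{-3η_max²T} ε². -/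
/-!
Put `c = πL`, `b = 3ηmax²` and `p = -c + η²(t - T)`. For `η² ≤ b` we have
`-c ≤ η²(t - T) ≤ 0` because `bT < c`, so `p` lies in the period cell centred at `-2c`:
there `G p = e^{-(c + η²(t - T))}` while `e^{-|p|} = e^{-(c - η²(t - T))}`, and `η²` times the
squared error is at most `b e^{-2c} e^{2b(T - t)}`. This bound is uniform in `η`, so no Fubini
argument is needed, and its time integral is `e^{-2c} (e^{2bT} - 1) / 2`, which gives the first
term even with `1/2` in place of `5/2`. For `η² > b` both functions take values in `[0, 1]`, so
the error is at most one, and `Tη² ≤ e^{-bT} e^{2η²T}` turns that part into the tail hypothesis.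
-/

open MeasureTheory Real Set

theorem sqrt_mul_lt_abs_iff {a x : ℝ} (ha : 0 ≤ a) (hx : 0 ≤ x) (η : ℝ) :
    √a * x < |η| ↔ a * x ^ 2 < η ^ 2 := by
  rw [← abs_of_nonneg (by positivity : 0 ≤ √a * x), ← sq_lt_sq, mul_pow, sq_sqrt ha]

theorem integral_mul_exp_two_mul_mul_sub (b T : ℝ) :
    ∫ t in (0 : ℝ)..T, b * exp (2 * b * (T - t)) = (exp (2 * b * T) - 1) / 2 := by
  have hderiv (t : ℝ) :
      HasDerivAt (fun t => -exp (2 * b * (T - t)) / 2) (b * exp (2 * b * (T - t))) t := by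
    refine ((((hasDerivAt_id' t).const_sub T).const_mul (2 * b)).exp.neg.div_const 2).congr_deriv ?_
    ring
  rw [intervalIntegral.integral_eq_sub_of_hasDerivAt (fun t _ => hderiv t)
    (by apply Continuous.intervalIntegrable; fun_prop)]
  simp only [sub_self, mul_zero, exp_zero, sub_zero]
  ring

theorem measurableSet_lt_sq (b : ℝ) : MeasurableSet {η : ℝ | b < η ^ 2} :=
  measurableSet_lt measurable_const (by fun_prop)

theorem mul_sq_le_exp_neg_mul_mul_exp {b T η : ℝ} (hT : 0 ≤ T) (hη : b < η ^ 2) :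
    T * η ^ 2 ≤ exp (-b * T) * exp (2 * η ^ 2 * T) :=
  calc T * η ^ 2 ≤ T * η ^ 2 + 1 := by linarith
    _ ≤ exp (T * η ^ 2) := add_one_le_exp _
    _ ≤ exp (-b * T + 2 * η ^ 2 * T) := exp_le_exp.2 (by nlinarith)
    _ = exp (-b * T) * exp (2 * η ^ 2 * T) := exp_add _ _

section Tail

variable {μ : Measure ℝ} {b T : ℝ} {w : ℝ → ℝ}

theorem integrableOn_sq_mul_of_integrableOn_exp_mul (hT : 0 < T) (hw : ∀ η, 0 ≤ w η)
    (hw_meas : AEStronglyMeasurable w μ)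
    (h : IntegrableOn (fun η => exp (2 * η ^ 2 * T) * w η) {η | b < η ^ 2} μ) :
    IntegrableOn (fun η => η ^ 2 * w η) {η | b < η ^ 2} μ := by
  refine (integrable_const_mul_iff (isUnit_iff_ne_zero.2 hT.ne') _).1 ?_
  refine (h.const_mul (exp (-b * T))).mono' ?_ ?_
  · exact ((continuous_pow 2).aestronglyMeasurable.mul hw_meas.restrict).const_mul T
  · filter_upwards [ae_restrict_mem (measurableSet_lt_sq b)] with η hη
    rw [norm_of_nonneg (by have := hw η; positivity), ← mul_assoc, ← mul_assoc]
    exact mul_le_mul_of_nonneg_right (mul_sq_le_exp_neg_mul_mul_exp hT.le hη) (hw η)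

theorem mul_setIntegral_sq_mul_le (hT : 0 ≤ T) (hw : ∀ η, 0 ≤ w η)
    (hsq : IntegrableOn (fun η => η ^ 2 * w η) {η | b < η ^ 2} μ)
    (h : IntegrableOn (fun η => exp (2 * η ^ 2 * T) * w η) {η | b < η ^ 2} μ) :
    T * ∫ η in {η | b < η ^ 2}, η ^ 2 * w η ∂μ ≤
      exp (-b * T) * ∫ η in {η | b < η ^ 2}, exp (2 * η ^ 2 * T) * w η ∂μ := by
  rw [← integral_const_mul, ← integral_const_mul]
  refine setIntegral_mono_on (hsq.const_mul T) (h.const_mul _) (measurableSet_lt_sq b)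
    fun η hη => ?_
  rw [← mul_assoc, ← mul_assoc]
  exact mul_le_mul_of_nonneg_right (mul_sq_le_exp_neg_mul_mul_exp hT hη) (hw η)

end Tail

def IsPeriodicExpNegAbs (c : ℝ) (G : ℝ → ℝ) : Prop :=
  ∀ (m : ℤ) (p : ℝ), (2 * (m : ℝ) - 1) * c ≤ p → p < (2 * (m : ℝ) + 1) * c →
    G p = Real.exp (-|p - 2 * (m : ℝ) * c|)

namespace IsPeriodicExpNegAbs

variable {c : ℝ} {G : ℝ → ℝ}

theorem mem_Icc (hc : 0 < c) (hG : IsPeriodicExpNegAbs c G) (p : ℝ) : G p ∈ Icc 0 1 := by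
  have hmem := sub_toIcoDiv_zsmul_mem_Ico (mul_pos two_pos hc) (-c) p
  set m := toIcoDiv (mul_pos two_pos hc) (-c) p
  rw [zsmul_eq_mul, mem_Ico] at hmem
  rw [hG m p (by linarith [hmem.1]) (by linarith [hmem.2])]
  exact ⟨(exp_pos _).le, exp_le_one_iff.2 (neg_nonpos.2 (abs_nonneg _))⟩

theorem sq_exp_neg_abs_sub_le_one (hc : 0 < c) (hG : IsPeriodicExpNegAbs c G) (p : ℝ) :
    (exp (-|p|) - G p) ^ 2 ≤ 1 := by
  obtain ⟨h0, h1⟩ := hG.mem_Icc hc p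
  exact (sq_le_one_iff_abs_le_one _).2 <| abs_sub_le_of_nonneg_of_le (exp_pos _).le
    (exp_le_one_iff.2 (neg_nonpos.2 (abs_nonneg _))) h0 h1

theorem apply_neg_add (hc : 0 < c) (hG : IsPeriodicExpNegAbs c G) {s : ℝ} (hs : -c ≤ s)
    (hs0 : s ≤ 0) : G (-c + s) = exp (-(c + s)) := by
  rcases hs0.lt_or_eq with hs0 | rfl
  · rw [hG (-1) _ (by push_cast; linarith) (by push_cast; linarith)]
    congr 2
    rw [abs_of_nonneg (by push_cast; linarith)]
    push_cast
    ring
  · rw [hG 0 _ (by push_cast; linarith) (by push_cast; linarith)]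
    push_cast
    rw [abs_of_nonpos (by linarith)]
    ring_nf

theorem sq_exp_neg_abs_sub_le (hc : 0 < c) (hG : IsPeriodicExpNegAbs c G) {s : ℝ} (hs : -c ≤ s)
    (hs0 : s ≤ 0) : (exp (-|-c + s|) - G (-c + s)) ^ 2 ≤ exp (-(2 * c)) * exp (-(2 * s)) := by
  rw [hG.apply_neg_add hc hs hs0, abs_of_nonpos (by linarith)]
  have hle : exp (-(-(-c + s))) ≤ exp (-(c + s)) := exp_le_exp.2 (by linarith)
  calc (exp (-(-(-c + s))) - exp (-(c + s))) ^ 2 ≤ exp (-(c + s)) ^ 2 :=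
        sq_le_sq' (by linarith [exp_pos (-(-(-c + s)))]) (by linarith [exp_pos (-(c + s))])
    _ = exp (-(2 * c)) * exp (-(2 * s)) := by rw [← exp_nat_mul, ← exp_add]; push_cast; ring_nf

theorem mul_sq_sub_mul_le (hc : 0 < c) (hG : IsPeriodicExpNegAbs c G) {b t T : ℝ} (hb : 0 ≤ b)
    (htT : t ≤ T) (hbc : b * (T - t) ≤ c) (w : ℝ → ℝ) {η : ℝ} (hw : 0 ≤ w η) :
    η ^ 2 * (exp (-|-c + η ^ 2 * (t - T)|) - G (-c + η ^ 2 * (t - T))) ^ 2 * w η ≤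
      {η | b < η ^ 2}.indicator (fun η => η ^ 2 * w η) η
        + exp (-(2 * c)) * (b * exp (2 * b * (T - t))) * w η := by
  by_cases hη : b < η ^ 2
  · rw [indicator_of_mem (show η ∈ {η : ℝ | b < η ^ 2} from hη)]
    have hD := hG.sq_exp_neg_abs_sub_le_one hc (-c + η ^ 2 * (t - T))
    have hK : 0 ≤ exp (-(2 * c)) * (b * exp (2 * b * (T - t))) * w η := by positivity
    nlinarith [mul_le_mul_of_nonneg_left hD (mul_nonneg (sq_nonneg η) hw)]
  · rw [indicator_of_notMem (show η ∉ {η : ℝ | b < η ^ 2} from hη), zero_add]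
    rw [not_lt] at hη
    have hs : η ^ 2 * (T - t) ≤ b * (T - t) := mul_le_mul_of_nonneg_right hη (by linarith)
    have hD := hG.sq_exp_neg_abs_sub_le hc (s := η ^ 2 * (t - T)) (by linarith)
      (mul_nonpos_of_nonneg_of_nonpos (sq_nonneg η) (by linarith))
    have hexp : exp (-(2 * (η ^ 2 * (t - T)))) ≤ exp (2 * b * (T - t)) :=
      exp_le_exp.2 (by linarith)
    calc η ^ 2 * (exp (-|-c + η ^ 2 * (t - T)|) - G (-c + η ^ 2 * (t - T))) ^ 2 * w η
        ≤ η ^ 2 * (exp (-(2 * c)) * exp (-(2 * (η ^ 2 * (t - T))))) * w η := by gcongr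
      _ ≤ b * (exp (-(2 * c)) * exp (2 * b * (T - t))) * w η := by gcongr
      _ = exp (-(2 * c)) * (b * exp (2 * b * (T - t))) * w η := by ring

theorem integral_mul_sq_sub_mul_le (hc : 0 < c) (hG : IsPeriodicExpNegAbs c G) {b t T : ℝ}
    (hb : 0 ≤ b) (htT : t ≤ T) (hbc : b * (T - t) ≤ c) {w : ℝ → ℝ} (hw : ∀ η, 0 ≤ w η)
    (hw_int : Integrable w)
    (hsq_int : IntegrableOn (fun η => η ^ 2 * w η) {η | b < η ^ 2}) :
    ∫ η, η ^ 2 * (exp (-|-c + η ^ 2 * (t - T)|) - G (-c + η ^ 2 * (t - T))) ^ 2 * w η ≤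
      (∫ η in {η | b < η ^ 2}, η ^ 2 * w η)
        + exp (-(2 * c)) * (b * exp (2 * b * (T - t))) * ∫ η, w η := by
  have hind := hsq_int.integrable_indicator (measurableSet_lt_sq b)
  calc _ ≤ ∫ η, {η | b < η ^ 2}.indicator (fun η => η ^ 2 * w η) η
          + exp (-(2 * c)) * (b * exp (2 * b * (T - t))) * w η :=
        integral_mono_of_nonneg (ae_of_all _ fun η => mul_nonneg (by positivity) (hw η))
          (hind.add (hw_int.const_mul _))
          (ae_of_all _ fun η => hG.mul_sq_sub_mul_le hc hb htT hbc w (hw η))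
    _ = _ := by
        rw [integral_add hind (hw_int.const_mul _),
          integral_indicator (measurableSet_lt_sq b), integral_const_mul]

theorem intervalIntegral_integral_mul_sq_sub_mul_le (hc : 0 < c) (hG : IsPeriodicExpNegAbs c G)
    {b T : ℝ} (hb : 0 ≤ b) (hT : 0 ≤ T) (hbT : b * T ≤ c) {w : ℝ → ℝ} (hw : ∀ η, 0 ≤ w η)
    (hw_int : Integrable w)
    (hsq_int : IntegrableOn (fun η => η ^ 2 * w η) {η | b < η ^ 2}) :
    ∫ t in (0 : ℝ)..T, ∫ η,
        η ^ 2 * (exp (-|-c + η ^ 2 * (t - T)|) - G (-c + η ^ 2 * (t - T))) ^ 2 * w η ≤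
      T * (∫ η in {η | b < η ^ 2}, η ^ 2 * w η)
        + exp (-(2 * c)) * ((exp (2 * b * T) - 1) / 2) * ∫ η, w η :=
  calc _ ≤ ∫ t in (0 : ℝ)..T, ((∫ η in {η | b < η ^ 2}, η ^ 2 * w η)
          + exp (-(2 * c)) * (b * exp (2 * b * (T - t))) * ∫ η, w η) := by
        rw [intervalIntegral.integral_of_le hT, intervalIntegral.integral_of_le hT]
        refine integral_mono_of_nonneg
          (ae_of_all _ fun t => integral_nonneg fun η => mul_nonneg (by positivity) (hw η))
          (Continuous.integrableOn_Ioc (by fun_prop)) ?_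
        filter_upwards [ae_restrict_mem measurableSet_Ioc] with t ht
        exact hG.integral_mul_sq_sub_mul_le hc hb ht.2 (by linarith [mul_nonneg hb ht.1.le])
          hw hw_int hsq_int
    _ = _ := by
        rw [intervalIntegral.integral_add intervalIntegrable_const
            (by apply Continuous.intervalIntegrable; fun_prop),
          intervalIntegral.integral_const, intervalIntegral.integral_mul_const,
          intervalIntegral.integral_const_mul, integral_mul_exp_two_mul_mul_sub, smul_eq_mul,
          sub_zero]

end IsPeriodicExpNegAbs

theorem boundary_error_estimate_general
    (L : ℝ) (G : ℝ → ℝ)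
    (hG : ∀ (m : ℤ) (p : ℝ), (2 * (m : ℝ) - 1) * (π * L) ≤ p →
      p < (2 * (m : ℝ) + 1) * (π * L) → G p = Real.exp (-|p - 2 * (m : ℝ) * (π * L)|))
    (T ηmax ε : ℝ) (hT : 0 < T) (hηmax : 0 < ηmax)
    (hdomain : π * L > 3 * ηmax ^ 2 * T)
    (f : ℝ → ℂ)
    (hfint : Integrable fun η : ℝ => ‖f η‖ ^ 2)
    (htail_int : IntegrableOn (fun η : ℝ => Real.exp (2 * η ^ 2 * T) * ‖f η‖ ^ 2)
      {η : ℝ | Real.sqrt 3 * ηmax < |η|})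
    (htail : ∫ η in {η : ℝ | Real.sqrt 3 * ηmax < |η|},
      Real.exp (2 * η ^ 2 * T) * ‖f η‖ ^ 2 ≤ ε ^ 2) :
    (∫ t in (0 : ℝ)..T, ∫ η : ℝ,
        η ^ 2 * (Real.exp (-|(-(π * L)) + η ^ 2 * (t - T)|)
          - G ((-(π * L)) + η ^ 2 * (t - T))) ^ 2 * ‖f η‖ ^ 2) ≤
      5 / 2 * Real.exp (-2 * (π * L - 3 * ηmax ^ 2 * T)) * (∫ η : ℝ, ‖f η‖ ^ 2) +
        Real.exp (-3 * ηmax ^ 2 * T) * ε ^ 2 := by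
  set c := π * L
  set b := 3 * ηmax ^ 2
  have hb : 0 ≤ b := by positivity
  have hc : 0 < c := lt_of_le_of_lt (by positivity) hdomain
  rw [show {η : ℝ | √3 * ηmax < |η|} = {η | b < η ^ 2} from
    Set.ext fun η => sqrt_mul_lt_abs_iff (by norm_num) hηmax.le η] at htail_int htail
  have hw (η : ℝ) : 0 ≤ ‖f η‖ ^ 2 := by positivity
  have hsq_int := integrableOn_sq_mul_of_integrableOn_exp_mul hT hw hfint.1 htail_int
  have hhigh := (mul_setIntegral_sq_mul_le hT.le hw hsq_int htail_int).trans
    (mul_le_mul_of_nonneg_left htail (exp_pos _).le)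
  have hlow : exp (-(2 * c)) * ((exp (2 * b * T) - 1) / 2) ≤ 5 / 2 * exp (-2 * (c - b * T)) := by
    rw [show -2 * (c - b * T) = -(2 * c) + 2 * b * T by ring, exp_add]
    nlinarith [mul_pos (exp_pos (-(2 * c))) (exp_pos (2 * b * T)), exp_pos (-(2 * c))]
  calc _ ≤ _ := IsPeriodicExpNegAbs.intervalIntegral_integral_mul_sq_sub_mul_le hc hG hb hT.le
        hdomain.le hw hfint hsq_int
    _ ≤ _ := by
        rw [neg_mul 3 (ηmax ^ 2), add_comm]
        exact add_le_add (mul_le_mul_of_nonneg_right hlow (integral_nonneg hw)) hhigh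

/-- Lemma 4.1 of the paper (Fourier-side form): time-integrated squared `H¹(x)`
seminorm of the boundary error at `p = -πL` between the whole-line and the
`p`-periodic Schrödingerised solutions. `G` is the `2πL`-periodic extension of
`e^{-|p|}` and `f` plays the role of `û_T`. -/
theorem boundary_error_estimate
    (L : ℝ) (hL : 0 < L) (G : ℝ → ℝ)
    (hG : ∀ (m : ℤ) (p : ℝ), (2 * (m : ℝ) - 1) * (π * L) ≤ p →
      p < (2 * (m : ℝ) + 1) * (π * L) → G p = Real.exp (-|p - 2 * (m : ℝ) * (π * L)|))
    (T ηmax ε : ℝ) (hT : 0 < T) (hηmax : 0 < ηmax)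
    (hdomain : π * L > 3 * ηmax ^ 2 * T) (hε : 0 ≤ ε)
    (f : ℝ → ℂ) (hf : Measurable f)
    (hfint : Integrable fun η : ℝ => ‖f η‖ ^ 2)
    (htail_int : IntegrableOn (fun η : ℝ => Real.exp (2 * η ^ 2 * T) * ‖f η‖ ^ 2)
      {η : ℝ | Real.sqrt 3 * ηmax < |η|})
    (htail : ∫ η in {η : ℝ | Real.sqrt 3 * ηmax < |η|},
      Real.exp (2 * η ^ 2 * T) * ‖f η‖ ^ 2 ≤ ε ^ 2) :
    (∫ t in (0 : ℝ)..T, ∫ η : ℝ,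
        η ^ 2 * (Real.exp (-|(-(π * L)) + η ^ 2 * (t - T)|)
          - G ((-(π * L)) + η ^ 2 * (t - T))) ^ 2 * ‖f η‖ ^ 2) ≤
      5 / 2 * Real.exp (-2 * (π * L - 3 * ηmax ^ 2 * T)) * (∫ η : ℝ, ‖f η‖ ^ 2) +
        Real.exp (-3 * ηmax ^ 2 * T) * ε ^ 2 :=
  boundary_error_estimate_general L G hG T ηmax ε hT hηmax hdomain f hfint htail_int htail
end

section
/- Let L > 0 and let G : ℝ → ℝ be the 2πL-periodic function with G(p) = e^{-|p-2mπL|} for (2m-1)πL ≤ p < (2m+1)πL, m ∈ ℤ. Let T > 0, η_max > 0 with πL > 3 η_max² T, ε ≥ 0, and let f : ℝ → ℂ be measurable with ∫_ℝ |f(η)|² dη < ∞ and ∫_{|η| > √3 η_max} e^{2η²T} |f(η)|² dη ≤ ε². Then ( ∫_{-πL}^{πL} ∫_ℝ | e^{-|p - η²T|} - G(p - η²T) |² |f(η)|² dη dp )^{1/2} ≤ √(5/2) · e^{-(πL - 3η_max²T)} ( ∫_ℝ |f(η)|² dη )^{1/2} + e^{-(3/2) η_max² T} ε. -/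
open MeasureTheory Real

/-!
Write `l = πL`. Since `0 ≤ e^{-|q|} ≤ G q`, the squared defect satisfies
`(e^{-|q|} - G q)² ≤ G q² - e^{-2|q|}`, and by periodicity `∫_{-l}^{l} G(p - s)² dp = 1 - e^{-2l}`
for every shift `s`. Comparing with the explicit integral of `e^{-2|p - s|}`, the `p`-integral of
the squared defect is at most `1` for every `s`, and at most `e^{-2(l - s)}` for `0 ≤ s ≤ l`.
After exchanging the integrals, frequencies with `η²T ≤ 3η_max²T` are controlled by the second
bound and `‖f‖²`, and the remaining ones by the first bound and the weight
`e^{2η²T} ≥ e^{6η_max²T}`.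
-/

lemma integral_exp_neg_two_mul_abs_of_nonneg {b : ℝ} (hb : 0 ≤ b) :
    ∫ q in (0 : ℝ)..b, exp (-(2 * |q|)) = (1 - exp (-(2 * b))) / 2 := by
  rw [intervalIntegral.integral_congr (g := fun q => exp (-2 * q)) fun q hq => by
    rw [Set.uIcc_of_le hb] at hq
    simp only [abs_of_nonneg hq.1, neg_mul]]
  rw [intervalIntegral.integral_comp_mul_left (fun x => exp x) (by norm_num : (-2 : ℝ) ≠ 0),
    integral_exp]
  simp only [mul_zero, exp_zero, smul_eq_mul]
  ring_nf

lemma integral_exp_neg_two_mul_abs {a b : ℝ} (ha : a ≤ 0) (hb : 0 ≤ b) :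
    ∫ q in a..b, exp (-(2 * |q|)) = (1 - exp (2 * a)) / 2 + (1 - exp (-(2 * b))) / 2 := by
  have hcont : Continuous fun q : ℝ => exp (-(2 * |q|)) := by fun_prop
  rw [← intervalIntegral.integral_add_adjacent_intervals (hcont.intervalIntegrable a 0)
      (hcont.intervalIntegrable 0 b)]
  have hsymm : ∫ q in a..0, exp (-(2 * |q|)) = ∫ q in (0 : ℝ)..(-a), exp (-(2 * |q|)) := by
    simpa [abs_neg] using
      (intervalIntegral.integral_comp_neg (a := 0) (b := -a) fun q => exp (-(2 * |q|))).symm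
  rw [hsymm, integral_exp_neg_two_mul_abs_of_nonneg (neg_nonneg.mpr ha),
    integral_exp_neg_two_mul_abs_of_nonneg hb]
  ring_nf

lemma intervalIntegral_sub_sq_le_sub {a b : ℝ} (hab : a ≤ b) {u v : ℝ → ℝ}
    (hu : IntervalIntegrable (fun x => u x ^ 2) volume a b)
    (hv : IntervalIntegrable (fun x => v x ^ 2) volume a b)
    (hu0 : ∀ x, 0 ≤ u x) (huv : ∀ x, u x ≤ v x) :
    ∫ x in a..b, (u x - v x) ^ 2 ≤ (∫ x in a..b, v x ^ 2) - ∫ x in a..b, u x ^ 2 := by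
  rw [← intervalIntegral.integral_sub hv hu, intervalIntegral.integral_of_le hab,
    intervalIntegral.integral_of_le hab]
  refine integral_mono_of_nonneg (.of_forall fun x => sq_nonneg _) (hv.sub hu).1
    (.of_forall fun x => ?_)
  nlinarith [hu0 x, huv x]

lemma sqrt_le_mul_sqrt_add_mul {X A a b ε : ℝ} (hA : 0 ≤ A) (ha : 0 ≤ a) (hb : 0 ≤ b)
    (hε : 0 ≤ ε) (hX : X ≤ a ^ 2 * A + b ^ 2 * ε ^ 2) : √X ≤ a * √A + b * ε := by
  rw [sqrt_le_left (by positivity)]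
  nlinarith [sq_sqrt hA, mul_nonneg (mul_nonneg ha (sqrt_nonneg A)) (mul_nonneg hb hε)]

lemma intervalIntegral_integral_mul_swap {φ : ℝ → ℝ → ℝ} {g : ℝ → ℝ} {a b C : ℝ} (hab : a ≤ b)
    (hφ : Measurable (Function.uncurry φ)) (hφC : ∀ p η, |φ p η| ≤ C) (hg : Integrable g) :
    ∫ p in a..b, ∫ η, φ p η * g η = ∫ η, (∫ p in a..b, φ p η) * g η := by
  simp_rw [intervalIntegral.integral_of_le hab, ← integral_mul_const]
  refine integral_integral_swap (Integrable.mono' ((integrable_const C).mul_prod hg.norm)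
    (hφ.aestronglyMeasurable.mul hg.1.comp_snd) (.of_forall fun z => ?_))
  rw [Function.uncurry_apply_pair, norm_mul]
  exact mul_le_mul_of_nonneg_right (hφC _ _) (norm_nonneg _)

namespace PeriodicExpNegAbs

variable {l : ℝ} {G : ℝ → ℝ} (hl : 0 < l)
  (hG : ∀ (m : ℤ) (p : ℝ), (2 * (m : ℝ) - 1) * l ≤ p → p < (2 * (m : ℝ) + 1) * l →
    G p = exp (-|p - 2 * (m : ℝ) * l|))
include hl hG

lemma eq_exp_round (p : ℝ) :
    G p = exp (-(2 * l * |p / (2 * l) - round (p / (2 * l))|)) := by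
  have h2l : 0 < 2 * l := by positivity
  obtain ⟨hlo, hhi⟩ := round_eq_iff.mp (rfl : round (p / (2 * l)) = _)
  rw [le_div_iff₀ h2l] at hlo
  rw [div_lt_iff₀ h2l] at hhi
  rw [hG (round (p / (2 * l))) p (by linarith) (by linarith), ← abs_of_pos h2l, ← abs_mul,
    abs_of_pos h2l, mul_sub, mul_div_cancel₀ _ h2l.ne']
  ring_nf

lemma measurable : Measurable G := by
  rw [funext (eq_exp_round hl hG)]
  simp only [round_eq]
  fun_prop

lemma periodic : Function.Periodic G (2 * l) := fun p => by
  have h2l : 2 * l ≠ 0 := by positivity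
  rw [eq_exp_round hl hG, eq_exp_round hl hG, add_div, div_self h2l, round_add_one]
  push_cast
  ring_nf

lemma nonneg (p : ℝ) : 0 ≤ G p := by
  rw [eq_exp_round hl hG p]
  positivity

lemma le_one (p : ℝ) : G p ≤ 1 := by
  rw [eq_exp_round hl hG p, exp_le_one_iff, neg_nonpos]
  positivity

lemma exp_neg_abs_le (p : ℝ) : exp (-|p|) ≤ G p := by
  have h2l : 0 < 2 * l := by positivity
  rw [eq_exp_round hl hG p, exp_le_exp, neg_le_neg_iff]
  calc 2 * l * |p / (2 * l) - round (p / (2 * l))|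
      ≤ 2 * l * |p / (2 * l) - ((0 : ℤ) : ℝ)| := mul_le_mul_of_nonneg_left (round_le _ 0) h2l.le
    _ = |p| := by rw [Int.cast_zero, sub_zero, abs_div, abs_of_pos h2l]; field_simp

lemma eq_exp_neg_abs_of_mem_Icc {q : ℝ} (hq : q ∈ Set.Icc (-l) l) : G q = exp (-|q|) := by
  rcases hq.2.eq_or_lt with rfl | hlt
  · rw [hG 1 q (by push_cast; linarith) (by push_cast; linarith)]
    rw [show q - 2 * ((1 : ℤ) : ℝ) * q = -q by push_cast; ring, abs_neg]
  · rw [hG 0 q (by push_cast; linarith [hq.1]) (by push_cast; linarith)]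
    simp

lemma sub_sq_le_one (q : ℝ) : (exp (-|q|) - G q) ^ 2 ≤ 1 := by
  have h1 : exp (-|q|) ≤ 1 := exp_le_one_iff.mpr (neg_nonpos.mpr (abs_nonneg q))
  nlinarith [exp_pos (-|q|), nonneg hl hG q, le_one hl hG q]

lemma intervalIntegrable_sq_comp_sub (s a b : ℝ) :
    IntervalIntegrable (fun p => G (p - s) ^ 2) volume a b :=
  (intervalIntegrable_const (c := (1 : ℝ))).mono_fun
    (((measurable hl hG).comp (measurable_id.sub_const s)).pow_const 2).aestronglyMeasurable
    (.of_forall fun p => by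
      simp only [norm_pow, norm_one, Real.norm_of_nonneg (nonneg hl hG _)]
      exact pow_le_one₀ (nonneg hl hG _) (le_one hl hG _))

lemma integral_sq_comp_sub (s : ℝ) : ∫ p in (-l)..l, G (p - s) ^ 2 = 1 - exp (-(2 * l)) := by
  have hper : Function.Periodic (fun q => G q ^ 2) (2 * l) := fun q => by
    simp only [periodic hl hG q]
  rw [intervalIntegral.integral_comp_sub_right (fun q => G q ^ 2) s,
    show l - s = -l - s + 2 * l by ring, hper.intervalIntegral_add_eq (-l - s) (-l),
    show -l + 2 * l = l by ring,
    intervalIntegral.integral_congr (g := fun q => exp (-(2 * |q|))) fun q hq => by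
      rw [Set.uIcc_of_le (by linarith)] at hq
      simp only [eq_exp_neg_abs_of_mem_Icc hl hG hq, ← exp_nat_mul]
      ring_nf,
    integral_exp_neg_two_mul_abs (by linarith) hl.le]
  ring_nf

lemma integral_sub_sq_le (s : ℝ) :
    ∫ p in (-l)..l, (exp (-|p - s|) - G (p - s)) ^ 2 ≤
      1 - exp (-(2 * l)) - ∫ p in (-l)..l, exp (-|p - s|) ^ 2 := by
  rw [← integral_sq_comp_sub hl hG s]
  exact intervalIntegral_sub_sq_le_sub (by linarith)
    (Continuous.intervalIntegrable (by fun_prop) _ _) (intervalIntegrable_sq_comp_sub hl hG s _ _)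
    (fun _ => (exp_pos _).le) (fun p => exp_neg_abs_le hl hG (p - s))

lemma integral_sub_sq_le_one (s : ℝ) :
    ∫ p in (-l)..l, (exp (-|p - s|) - G (p - s)) ^ 2 ≤ 1 := by
  have hnonneg : 0 ≤ ∫ p in (-l)..l, exp (-|p - s|) ^ 2 :=
    intervalIntegral.integral_nonneg (by linarith) fun _ _ => sq_nonneg _
  linarith [integral_sub_sq_le hl hG s, exp_pos (-(2 * l))]

lemma integral_sub_sq_le_exp {s : ℝ} (hs0 : 0 ≤ s) (hsl : s ≤ l) :
    ∫ p in (-l)..l, (exp (-|p - s|) - G (p - s)) ^ 2 ≤ exp (-(2 * (l - s))) := by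
  have hE : ∫ p in (-l)..l, exp (-|p - s|) ^ 2 =
      (1 - exp (2 * (-l - s))) / 2 + (1 - exp (-(2 * (l - s)))) / 2 := by
    simp only [← exp_nat_mul, Nat.cast_ofNat, mul_neg]
    rw [intervalIntegral.integral_comp_sub_right (fun q => exp (-(2 * |q|))) s,
      integral_exp_neg_two_mul_abs (by linarith) (by linarith)]
  have hmono : exp (2 * (-l - s)) ≤ exp (-(2 * l)) := exp_le_exp.mpr (by linarith)
  have hdefect := integral_sub_sq_le hl hG s
  rw [hE] at hdefect
  linarith [exp_pos (-(2 * l)), exp_pos (-(2 * (l - s)))]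

lemma integral_sub_sq_mul_le {s B x : ℝ} (hs : 0 ≤ s) (hBl : B ≤ l) (hx : 0 ≤ x) :
    (∫ p in (-l)..l, (exp (-|p - s|) - G (p - s)) ^ 2) * x ≤
      exp (-(l - B)) ^ 2 * x + exp (-B) ^ 2 * (if B < s then exp (2 * s) * x else 0) := by
  split_ifs with hsB
  · have hweight : 1 ≤ exp (-B) ^ 2 * exp (2 * s) := by
      rw [← exp_nat_mul, Nat.cast_ofNat, ← exp_add]
      exact one_le_exp (by linarith)
    nlinarith [integral_sub_sq_le_one hl hG s, sq_nonneg (exp (-(l - B)))]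
  · have hsB : s ≤ B := not_lt.mp hsB
    rw [mul_zero, add_zero]
    refine mul_le_mul_of_nonneg_right ((integral_sub_sq_le_exp hl hG hs (hsB.trans hBl)).trans ?_)
      hx
    rw [← exp_nat_mul, Nat.cast_ofNat, exp_le_exp]
    linarith

lemma integral_integral_sub_sq_mul_le {T B ε : ℝ} {g : ℝ → ℝ} (hT : 0 ≤ T) (hBl : B ≤ l)
    (hg : Integrable g) (hg0 : ∀ η, 0 ≤ g η)
    (htail_int : IntegrableOn (fun η => exp (2 * η ^ 2 * T) * g η) {η | B < η ^ 2 * T})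
    (htail : ∫ η in {η | B < η ^ 2 * T}, exp (2 * η ^ 2 * T) * g η ≤ ε ^ 2) :
    ∫ η, (∫ p in (-l)..l, (exp (-|p - η ^ 2 * T|) - G (p - η ^ 2 * T)) ^ 2) * g η ≤
      exp (-(l - B)) ^ 2 * (∫ η, g η) + exp (-B) ^ 2 * ε ^ 2 := by
  have hS : MeasurableSet {η : ℝ | B < η ^ 2 * T} := measurableSet_lt measurable_const (by fun_prop)
  have hbound : Integrable fun η => exp (-(l - B)) ^ 2 * g η + exp (-B) ^ 2 *
      {η | B < η ^ 2 * T}.indicator (fun η => exp (2 * η ^ 2 * T) * g η) η :=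
    (hg.const_mul _).add ((htail_int.integrable_indicator hS).const_mul _)
  refine (integral_mono_of_nonneg (.of_forall fun η => ?_) hbound (.of_forall fun η => ?_)).trans ?_
  · exact mul_nonneg (intervalIntegral.integral_nonneg (by linarith) fun _ _ => sq_nonneg _)
      (hg0 η)
  · simpa only [Set.indicator_apply, Set.mem_ofPred_eq, mul_assoc] using
      integral_sub_sq_mul_le hl hG (s := η ^ 2 * T) (B := B) (by positivity) hBl (hg0 η)
  · rw [integral_add (hg.const_mul _) ((htail_int.integrable_indicator hS).const_mul _),
      integral_const_mul, integral_const_mul, integral_indicator hS]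
    gcongr

end PeriodicExpNegAbs

theorem initial_error_whole_line_vs_periodic_general
    (L : ℝ) (hL : 0 < L) (G : ℝ → ℝ)
    (hG : ∀ (m : ℤ) (p : ℝ), (2 * (m : ℝ) - 1) * (π * L) ≤ p →
      p < (2 * (m : ℝ) + 1) * (π * L) → G p = Real.exp (-|p - 2 * (m : ℝ) * (π * L)|))
    (T ηmax ε : ℝ) (hT : 0 < T) (hηmax : 0 < ηmax)
    (hdomain : π * L > 3 * ηmax ^ 2 * T) (hε : 0 ≤ ε)
    (f : ℝ → ℂ)
    (hfint : Integrable fun η : ℝ => ‖f η‖ ^ 2)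
    (htail_int : IntegrableOn (fun η : ℝ => Real.exp (2 * η ^ 2 * T) * ‖f η‖ ^ 2)
      {η : ℝ | Real.sqrt 3 * ηmax < |η|})
    (htail : ∫ η in {η : ℝ | Real.sqrt 3 * ηmax < |η|},
      Real.exp (2 * η ^ 2 * T) * ‖f η‖ ^ 2 ≤ ε ^ 2) :
    Real.sqrt (∫ p in (-(π * L))..(π * L), ∫ η : ℝ,
        (Real.exp (-|p - η ^ 2 * T|) - G (p - η ^ 2 * T)) ^ 2 * ‖f η‖ ^ 2) ≤
      Real.sqrt (5 / 2) * Real.exp (-(π * L - 3 * ηmax ^ 2 * T)) *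
          Real.sqrt (∫ η : ℝ, ‖f η‖ ^ 2) +
        Real.exp (-(3 / 2) * ηmax ^ 2 * T) * ε := by
  set l := π * L
  have hl : 0 < l := by positivity
  set B := 3 * ηmax ^ 2 * T
  have htail_set : {η : ℝ | √3 * ηmax < |η|} = {η | B < η ^ 2 * T} := Set.ext fun η => by
    rw [Set.mem_ofPred_eq, Set.mem_ofPred_eq,
      ← pow_lt_pow_iff_left₀ (by positivity) (abs_nonneg η) two_ne_zero, mul_pow,
      sq_sqrt (by norm_num), sq_abs, mul_lt_mul_iff_left₀ hT]
  rw [htail_set] at htail_int htail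
  have hmeas : Measurable (Function.uncurry fun p η : ℝ =>
      (exp (-|p - η ^ 2 * T|) - G (p - η ^ 2 * T)) ^ 2) := by
    have := PeriodicExpNegAbs.measurable hl hG
    unfold Function.uncurry
    fun_prop
  rw [intervalIntegral_integral_mul_swap (by linarith) hmeas (C := 1) (fun p η => by
    rw [abs_of_nonneg (sq_nonneg _)]
    exact PeriodicExpNegAbs.sub_sq_le_one hl hG _) hfint]
  calc _ ≤ exp (-(l - B)) * √(∫ η, ‖f η‖ ^ 2) + exp (-B) * ε :=
        sqrt_le_mul_sqrt_add_mul (integral_nonneg fun _ => by positivity) (exp_pos _).le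
          (exp_pos _).le hε (PeriodicExpNegAbs.integral_integral_sub_sq_mul_le hl hG hT.le
            hdomain.le hfint (fun _ => by positivity) htail_int htail)
    _ ≤ _ := by
      gcongr ?_ + ?_
      · rw [mul_assoc]
        exact le_mul_of_one_le_left (by positivity) (one_le_sqrt.mpr (by norm_num))
      · have : 0 ≤ ηmax ^ 2 * T := by positivity
        gcongr
        linarith

/-- Lemma 4.2 of the paper (Fourier-side form): the `L²(Ω_x)×L²(Ω_p)` distance at
time `t = 0` between the whole-line Schrödingerised solution `w` and the
`p`-periodic one `𝓦`, with `G` the `2πL`-periodic extension of `e^{-|p|}` and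
`f` playing the role of `û_T`. -/
theorem initial_error_whole_line_vs_periodic
    (L : ℝ) (hL : 0 < L) (G : ℝ → ℝ)
    (hG : ∀ (m : ℤ) (p : ℝ), (2 * (m : ℝ) - 1) * (π * L) ≤ p →
      p < (2 * (m : ℝ) + 1) * (π * L) → G p = Real.exp (-|p - 2 * (m : ℝ) * (π * L)|))
    (T ηmax ε : ℝ) (hT : 0 < T) (hηmax : 0 < ηmax)
    (hdomain : π * L > 3 * ηmax ^ 2 * T) (hε : 0 ≤ ε)
    (f : ℝ → ℂ) (hf : Measurable f)
    (hfint : Integrable fun η : ℝ => ‖f η‖ ^ 2)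
    (htail_int : IntegrableOn (fun η : ℝ => Real.exp (2 * η ^ 2 * T) * ‖f η‖ ^ 2)
      {η : ℝ | Real.sqrt 3 * ηmax < |η|})
    (htail : ∫ η in {η : ℝ | Real.sqrt 3 * ηmax < |η|},
      Real.exp (2 * η ^ 2 * T) * ‖f η‖ ^ 2 ≤ ε ^ 2) :
    Real.sqrt (∫ p in (-(π * L))..(π * L), ∫ η : ℝ,
        (Real.exp (-|p - η ^ 2 * T|) - G (p - η ^ 2 * T)) ^ 2 * ‖f η‖ ^ 2) ≤
      Real.sqrt (5 / 2) * Real.exp (-(π * L - 3 * ηmax ^ 2 * T)) *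
          Real.sqrt (∫ η : ℝ, ‖f η‖ ^ 2) +
        Real.exp (-(3 / 2) * ηmax ^ 2 * T) * ε :=
  initial_error_whole_line_vs_periodic_general L hL G hG T ηmax ε hT hηmax hdomain hε f hfint
    htail_int htail
end

section
/- Let T > 0, L > 0, and let E : [0,T] × [-π,π] × [-πL, πL] → ℂ be a smooth function that is 2π-periodic in x (E and all its x-derivatives agree at x = -π and x = π) and satisfies ∂_t E = -∂_x ∂_x ∂_p E. Then for every t ∈ [0,T], d/dt ∫_{-πL}^{πL} ∫_{-π}^{π} |E(t,x,p)|² dx dp = ∫_{-π}^{π} ( |∂_x E(t,x,πL)|² - |∂_x E(t,x,-πL)|² ) dx. -/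
open MeasureTheory Real

section Work
variable {E : ℝ → ℝ → ℝ → ℂ}

def Gf (E : ℝ → ℝ → ℝ → ℂ) : ℝ × ℝ × ℝ → ℂ := fun q => E q.1 q.2.1 q.2.2

noncomputable def pdv (v : ℝ × ℝ × ℝ) (f : ℝ × ℝ × ℝ → ℂ) : ℝ × ℝ × ℝ → ℂ :=
  fun q => fderiv ℝ f q v

def phi2 (z w : ℂ) : ℝ := 2 * (z.re * w.re + z.im * w.im)

variable (hsm : ContDiff ℝ (⊤ : ℕ∞) (Gf E)) (hper : ∀ t x p, E t (x + 2 * π) p = E t x p)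

lemma pdv_contDiff {f : ℝ×ℝ×ℝ → ℂ} (hf : ContDiff ℝ (⊤ : ℕ∞) f) (v : ℝ×ℝ×ℝ) :
    ContDiff ℝ (⊤ : ℕ∞) (pdv v f) :=
  (ContinuousLinearMap.apply ℝ ℂ v).contDiff.comp (hf.fderiv_right (by simp))

lemma hasDerivAt_sliceT {f : ℝ×ℝ×ℝ → ℂ} (hf : Differentiable ℝ f) (t x p : ℝ) :
    HasDerivAt (fun τ => f (τ, x, p)) (pdv (1,0,0) f (t, x, p)) t :=
  (hf (t,x,p)).hasFDerivAt.comp_hasDerivAt t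
    ((hasDerivAt_id t).prodMk ((hasDerivAt_const t x).prodMk (hasDerivAt_const t p)))

lemma hasDerivAt_sliceX {f : ℝ×ℝ×ℝ → ℂ} (hf : Differentiable ℝ f) (t x p : ℝ) :
    HasDerivAt (fun y => f (t, y, p)) (pdv (0,1,0) f (t, x, p)) x :=
  (hf (t,x,p)).hasFDerivAt.comp_hasDerivAt x
    ((hasDerivAt_const x t).prodMk ((hasDerivAt_id x).prodMk (hasDerivAt_const x p)))

lemma hasDerivAt_sliceP {f : ℝ×ℝ×ℝ → ℂ} (hf : Differentiable ℝ f) (t x p : ℝ) :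
    HasDerivAt (fun q => f (t, x, q)) (pdv (0,0,1) f (t, x, p)) p :=
  (hf (t,x,p)).hasFDerivAt.comp_hasDerivAt p
    ((hasDerivAt_const p t).prodMk ((hasDerivAt_const p x).prodMk (hasDerivAt_id p)))

lemma pdv_comm {f : ℝ×ℝ×ℝ → ℂ} (hf : ContDiff ℝ (⊤ : ℕ∞) f) (v w : ℝ×ℝ×ℝ) :
    pdv v (pdv w f) = pdv w (pdv v f) := by
  funext q
  have hd : ∀ y, HasFDerivAt f (fderiv ℝ f y) y :=
    fun y => (hf.differentiable (by simp) y).hasFDerivAt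
  have h2 : HasFDerivAt (fderiv ℝ f) (fderiv ℝ (fderiv ℝ f) q) q :=
    (((hf.fderiv_right (by exact WithTop.coe_le_coe.mpr le_top)).differentiable one_ne_zero) q).hasFDerivAt
  have hsym := second_derivative_symmetric hd h2
  have hc : ∀ u : ℝ×ℝ×ℝ, HasFDerivAt (fun y => fderiv ℝ f y u)
      ((ContinuousLinearMap.apply ℝ ℂ u).comp (fderiv ℝ (fderiv ℝ f) q)) q :=
    fun u => (ContinuousLinearMap.apply ℝ ℂ u).hasFDerivAt.comp q h2
  show fderiv ℝ (pdv w f) q v = fderiv ℝ (pdv v f) q w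
  unfold pdv
  rw [(hc w).fderiv, (hc v).fderiv]
  simpa using hsym v w

lemma hasDerivAt_normSq {c : ℝ → ℂ} {c' : ℂ} {t : ℝ} (hc : HasDerivAt c c' t) :
    HasDerivAt (fun τ => ‖c τ‖ ^ 2) (phi2 (c t) c') t := by
  have hre : HasDerivAt (fun τ => (c τ).re) c'.re t :=
    Complex.reCLM.hasFDerivAt.comp_hasDerivAt t hc
  have him : HasDerivAt (fun τ => (c τ).im) c'.im t :=
    Complex.imCLM.hasFDerivAt.comp_hasDerivAt t hc
  have h := (hre.mul hre).add (him.mul him)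
  have heq : (fun τ => ‖c τ‖ ^ 2)
      = fun τ => (c τ).re * (c τ).re + (c τ).im * (c τ).im := by
    funext τ
    rw [← Complex.normSq_apply, ← Complex.sq_norm]
  rw [heq]
  refine h.congr_deriv ?_
  unfold phi2; ring

lemma hasDerivAt_phi2 {c d : ℝ → ℂ} {c' d' : ℂ} {x : ℝ}
    (hc : HasDerivAt c c' x) (hd : HasDerivAt d d' x) :
    HasDerivAt (fun y => phi2 (c y) (d y)) (phi2 c' (d x) + phi2 (c x) d') x := by
  have hcr : HasDerivAt (fun τ => (c τ).re) c'.re x :=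
    Complex.reCLM.hasFDerivAt.comp_hasDerivAt x hc
  have hci : HasDerivAt (fun τ => (c τ).im) c'.im x :=
    Complex.imCLM.hasFDerivAt.comp_hasDerivAt x hc
  have hdr : HasDerivAt (fun τ => (d τ).re) d'.re x :=
    Complex.reCLM.hasFDerivAt.comp_hasDerivAt x hd
  have hdi : HasDerivAt (fun τ => (d τ).im) d'.im x :=
    Complex.imCLM.hasFDerivAt.comp_hasDerivAt x hd
  have h := (((hcr.mul hdr).add (hci.mul hdi)).const_mul (2:ℝ))
  refine h.congr_deriv ?_
  unfold phi2; ring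

lemma integrableOn_rect {f : ℝ×ℝ → ℝ} (hf : Continuous f) {a b c d : ℝ} :
    IntegrableOn f (Set.Ioc a b ×ˢ Set.Ioc c d)
      ((volume : Measure ℝ).prod volume) := by
  rw [← Measure.volume_eq_prod]
  exact (hf.continuousOn.integrableOn_compact (isCompact_Icc.prod isCompact_Icc)).mono_set
    (Set.prod_mono Set.Ioc_subset_Icc_self Set.Ioc_subset_Icc_self)

lemma phi2_cont : Continuous fun zw : ℂ × ℂ => phi2 zw.1 zw.2 := by
  unfold phi2; fun_prop

noncomputable def Xf (E : ℝ → ℝ → ℝ → ℂ) := pdv (0,1,0) (Gf E)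
noncomputable def Af (E : ℝ → ℝ → ℝ → ℂ) := pdv (0,0,1) (Gf E)
noncomputable def Wf (E : ℝ → ℝ → ℝ → ℂ) := pdv (0,1,0) (Af E)
noncomputable def Zf (E : ℝ → ℝ → ℝ → ℂ) := pdv (0,1,0) (Wf E)
noncomputable def Tf (E : ℝ → ℝ → ℝ → ℂ) := pdv (1,0,0) (Gf E)

section Lemmas
include hsm

lemma hXs : ContDiff ℝ (⊤ : ℕ∞) (Xf E) := pdv_contDiff hsm _
lemma hAs : ContDiff ℝ (⊤ : ℕ∞) (Af E) := pdv_contDiff hsm _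
lemma hWs : ContDiff ℝ (⊤ : ℕ∞) (Wf E) := pdv_contDiff (hAs hsm) _
lemma hZs : ContDiff ℝ (⊤ : ℕ∞) (Zf E) := pdv_contDiff (hWs hsm) _
lemma hTs : ContDiff ℝ (⊤ : ℕ∞) (Tf E) := pdv_contDiff hsm _

lemma derivT (t x p : ℝ) : deriv (fun τ => E τ x p) t = Tf E (t,x,p) :=
  (hasDerivAt_sliceT (hsm.differentiable (by simp)) t x p).deriv

lemma derivX (t x p : ℝ) : deriv (fun y => E t y p) x = Xf E (t,x,p) :=
  (hasDerivAt_sliceX (hsm.differentiable (by simp)) t x p).deriv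

lemma derivP (t x p : ℝ) : deriv (fun q => E t x q) p = Af E (t,x,p) :=
  (hasDerivAt_sliceP (hsm.differentiable (by simp)) t x p).deriv

lemma derivXXP (t x p : ℝ) :
    deriv (deriv fun y => deriv (fun q => E t y q) p) x = Zf E (t,x,p) := by
  have h1 : (fun y => deriv (fun q => E t y q) p) = fun y => Af E (t,y,p) := by
    funext y; exact derivP hsm t y p
  have h2 : (deriv fun y => Af E (t,y,p)) = fun y => Wf E (t,y,p) := by
    funext y
    exact (hasDerivAt_sliceX ((hAs hsm).differentiable (by simp)) t y p).deriv
  rw [h1, h2]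
  exact (hasDerivAt_sliceX ((hWs hsm).differentiable (by simp)) t x p).deriv

lemma pdvPX : pdv (0,0,1) (Xf E) = Wf E := by
  unfold Xf Wf Af
  exact pdv_comm hsm _ _

end Lemmas

section PerLemmas
include hper

lemma perG (t p : ℝ) : Function.Periodic (fun x => Gf E (t,x,p)) (2*π) :=
  fun x => hper t x p

include hsm

lemma perA (t p : ℝ) : Function.Periodic (fun x => Af E (t,x,p)) (2*π) := by
  intro x
  show Af E (t, x + 2*π, p) = Af E (t, x, p)
  rw [← derivP hsm, ← derivP hsm]
  congr 1
  funext q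
  exact hper t x q

lemma perW (t p : ℝ) : Function.Periodic (fun x => Wf E (t,x,p)) (2*π) := by
  have h : (fun x => Wf E (t,x,p)) = deriv (fun x => Af E (t,x,p)) := by
    funext x
    exact ((hasDerivAt_sliceX ((hAs hsm).differentiable (by simp)) t x p).deriv).symm
  rw [h]
  intro x
  rw [← deriv_comp_add_const]
  congr 1
  funext y
  exact perA hsm hper t p y

end PerLemmas

end Work

/-- The integration-by-parts energy identity (equation (4.21) of the paper): if `E`
is smooth, `2π`-periodic in `x`, and satisfies `∂ₜE = -∂ₓ∂ₓ∂ₚE`, then the `L²` energy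
over `[-π,π]×[-πL,πL]` changes only through the `H¹(x)`-seminorm fluxes at `p = ±πL`. -/
theorem energy_identity
    (T L : ℝ) (hT : 0 < T) (hL : 0 < L)
    (E : ℝ → ℝ → ℝ → ℂ)
    (hsmooth : ContDiff ℝ (⊤ : ℕ∞) fun q : ℝ × ℝ × ℝ => E q.1 q.2.1 q.2.2)
    (hper : ∀ t x p, E t (x + 2 * π) p = E t x p)
    (hPDE : ∀ t ∈ Set.Icc (0 : ℝ) T, ∀ x ∈ Set.Icc (-π) π,
      ∀ p ∈ Set.Icc (-(π * L)) (π * L),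
      deriv (fun τ => E τ x p) t =
        -(deriv (deriv fun y => deriv (fun q => E t y q) p) x)) :
    ∀ t ∈ Set.Icc (0 : ℝ) T,
      HasDerivAt
        (fun τ => ∫ p in (-(π * L))..(π * L), ∫ x in (-π)..π, ‖E τ x p‖ ^ 2)
        (∫ x in (-π)..π,
          (‖deriv (fun y => E t y (π * L)) x‖ ^ 2 -
            ‖deriv (fun y => E t y (-(π * L))) x‖ ^ 2)) t := by
  intro t ht
  have hπ := pi_pos
  have hπL : 0 < π * L := mul_pos pi_pos hL
  have hsm : ContDiff ℝ (⊤ : ℕ∞) (Gf E) := hsmooth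
  have hGd : Differentiable ℝ (Gf E) := hsm.differentiable (by simp)
  have hGc : Continuous (Gf E) := hsm.continuous
  have hXd : Differentiable ℝ (Xf E) := (hXs hsm).differentiable (by simp)
  have hWd : Differentiable ℝ (Wf E) := (hWs hsm).differentiable (by simp)
  have hXc : Continuous (Xf E) := (hXs hsm).continuous
  have hWc : Continuous (Wf E) := (hWs hsm).continuous
  have hZc : Continuous (Zf E) := (hZs hsm).continuous
  have hTc : Continuous (Tf E) := (hTs hsm).continuous
  set a : ℝ := -(π*L) with ha
  set b : ℝ := π*L with hb
  have hab : a ≤ b := by rw [ha, hb]; linarith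
  have hcd : -π ≤ π := by linarith
  set S : Set (ℝ×ℝ) := Set.Ioc a b ×ˢ Set.Ioc (-π) π with hS
  have hSmeas : MeasurableSet S := measurableSet_Ioc.prod measurableSet_Ioc
  have hmap : ∀ τ : ℝ, Continuous fun z : ℝ×ℝ => (τ, z.2, z.1) := fun τ =>
    continuous_const.prodMk (continuous_snd.prodMk continuous_fst)
  -- rewrite the double interval integral as one set integral over S
  have eqF : ∀ τ : ℝ, (∫ p in a..b, ∫ x in (-π)..π, ‖E τ x p‖ ^ 2)
      = ∫ z in S, ‖Gf E (τ, z.2, z.1)‖ ^ 2 ∂((volume : Measure ℝ).prod volume) := by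
    intro τ
    have hint : IntegrableOn (fun z : ℝ×ℝ => ‖Gf E (τ, z.2, z.1)‖ ^ 2) S
        ((volume : Measure ℝ).prod volume) :=
      integrableOn_rect (((hGc.comp (hmap τ)).norm).pow 2)
    rw [hS] at hint ⊢
    rw [MeasureTheory.setIntegral_prod _ hint, intervalIntegral.integral_of_le hab]
    simp only [intervalIntegral.integral_of_le hcd]
    simp only [Gf]
  -- differentiation under the integral sign
  have hbd0 : ∃ C : ℝ, ∀ q ∈ (Set.Icc (t-1) (t+1) ×ˢ Set.Icc (-π) π ×ˢ Set.Icc a b),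
      ‖phi2 (Gf E q) (Tf E q)‖ ≤ C :=
    (isCompact_Icc.prod (isCompact_Icc.prod isCompact_Icc)).exists_bound_of_continuousOn
      ((phi2_cont.comp (hGc.prodMk hTc)).continuousOn)
  obtain ⟨C, hC⟩ := hbd0
  have h1 : ∀ᶠ τ in nhds t, AEStronglyMeasurable
      (fun z : ℝ×ℝ => ‖Gf E (τ, z.2, z.1)‖ ^ 2)
      (((volume : Measure ℝ).prod volume).restrict S) :=
    Filter.Eventually.of_forall fun τ =>
      (((hGc.comp (hmap τ)).norm).pow 2).aestronglyMeasurable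
  have h2 : Integrable (fun z : ℝ×ℝ => ‖Gf E (t, z.2, z.1)‖ ^ 2)
      (((volume : Measure ℝ).prod volume).restrict S) := by
    rw [hS]; exact integrableOn_rect (((hGc.comp (hmap t)).norm).pow 2)
  have h3 : AEStronglyMeasurable
      (fun z : ℝ×ℝ => phi2 (Gf E (t, z.2, z.1)) (Tf E (t, z.2, z.1)))
      (((volume : Measure ℝ).prod volume).restrict S) :=
    (phi2_cont.comp ((hGc.comp (hmap t)).prodMk (hTc.comp (hmap t)))).aestronglyMeasurable
  have h4 : ∀ᵐ z ∂(((volume : Measure ℝ).prod volume).restrict S),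
      ∀ τ ∈ Metric.ball t 1,
        ‖phi2 (Gf E (τ, z.2, z.1)) (Tf E (τ, z.2, z.1))‖ ≤ C := by
    refine Filter.eventually_of_mem (self_mem_ae_restrict hSmeas) ?_
    intro z hz τ hτ
    have habs : |τ - t| ≤ 1 := le_of_lt (by rwa [Metric.mem_ball, Real.dist_eq] at hτ)
    obtain ⟨h5, h6⟩ := abs_le.1 habs
    exact hC (τ, z.2, z.1) ⟨⟨by linarith, by linarith⟩,
      Set.Ioc_subset_Icc_self hz.2, Set.Ioc_subset_Icc_self hz.1⟩
  have hSfin : ((volume : Measure ℝ).prod volume) S < ⊤ := by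
    refine lt_of_le_of_lt (measure_mono
      (Set.prod_mono Set.Ioc_subset_Icc_self Set.Ioc_subset_Icc_self)) ?_
    rw [← Measure.volume_eq_prod]
    exact (isCompact_Icc.prod isCompact_Icc).measure_lt_top
  have h5 : Integrable (fun _ : ℝ×ℝ => C)
      (((volume : Measure ℝ).prod volume).restrict S) :=
    integrableOn_const hSfin.ne
  have h6 : ∀ᵐ z ∂(((volume : Measure ℝ).prod volume).restrict S),
      ∀ τ ∈ Metric.ball t 1,
        HasDerivAt (fun σ => ‖Gf E (σ, z.2, z.1)‖ ^ 2)
          (phi2 (Gf E (τ, z.2, z.1)) (Tf E (τ, z.2, z.1))) τ :=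
    Filter.Eventually.of_forall fun z τ _ =>
      hasDerivAt_normSq (hasDerivAt_sliceT hGd τ z.2 z.1)
  have key := hasDerivAt_integral_of_dominated_loc_of_deriv_le
    (μ := ((volume : Measure ℝ).prod volume).restrict S)
    (F := fun τ (z : ℝ×ℝ) => ‖Gf E (τ, z.2, z.1)‖ ^ 2)
    (F' := fun τ (z : ℝ×ℝ) => phi2 (Gf E (τ, z.2, z.1)) (Tf E (τ, z.2, z.1)))
    (x₀ := t) (bound := fun _ => C) (s := Metric.ball t 1) (Metric.ball_mem_nhds t one_pos) h1 h2 h3 h4 h5 h6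
  have hder := key.2
  -- value of the derivative : PDE + integration by parts in x
  have inner_eq : ∀ p ∈ Set.Icc a b,
      (∫ x in Set.Ioc (-π) π, phi2 (Gf E (t,x,p)) (Tf E (t,x,p)))
      = ∫ x in Set.Ioc (-π) π, phi2 (Xf E (t,x,p)) (Wf E (t,x,p)) := by
    intro p hp
    rw [← intervalIntegral.integral_of_le hcd, ← intervalIntegral.integral_of_le hcd]
    have hTZ : ∀ x ∈ Set.uIcc (-π) π,
        phi2 (Gf E (t,x,p)) (Tf E (t,x,p)) = -(phi2 (Gf E (t,x,p)) (Zf E (t,x,p))) := by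
      intro x hx
      have hx' : x ∈ Set.Icc (-π) π := by rwa [Set.uIcc_of_le hcd] at hx
      have hpde := hPDE t ht x hx' p hp
      rw [derivT hsm, derivXXP hsm] at hpde
      rw [hpde]
      unfold phi2
      simp only [Complex.neg_re, Complex.neg_im]
      ring
    rw [intervalIntegral.integral_congr hTZ]
    have hderiv : ∀ x ∈ Set.uIcc (-π) π,
        HasDerivAt (fun y => phi2 (Gf E (t,y,p)) (Wf E (t,y,p)))
          (phi2 (Xf E (t,x,p)) (Wf E (t,x,p)) + phi2 (Gf E (t,x,p)) (Zf E (t,x,p))) x :=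
      fun x _ =>
        hasDerivAt_phi2 (hasDerivAt_sliceX hGd t x p) (hasDerivAt_sliceX hWd t x p)
    have hcXW : Continuous fun x => phi2 (Xf E (t,x,p)) (Wf E (t,x,p)) :=
      phi2_cont.comp ((hXc.comp (by fun_prop)).prodMk (hWc.comp (by fun_prop)))
    have hcGZ : Continuous fun x => phi2 (Gf E (t,x,p)) (Zf E (t,x,p)) :=
      phi2_cont.comp ((hGc.comp (by fun_prop)).prodMk (hZc.comp (by fun_prop)))
    have hFTC := intervalIntegral.integral_eq_sub_of_hasDerivAt hderiv
      ((hcXW.add hcGZ).intervalIntegrable _ _)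
    have hbd : phi2 (Gf E (t,π,p)) (Wf E (t,π,p))
        - phi2 (Gf E (t,-π,p)) (Wf E (t,-π,p)) = 0 := by
      have e1 : Gf E (t,π,p) = Gf E (t,-π,p) := by
        have := perG (E := E) hper t p (-π)
        simpa [show -π + 2*π = π by ring] using this
      have e2 : Wf E (t,π,p) = Wf E (t,-π,p) := by
        have := perW hsm hper t p (-π)
        simpa [show -π + 2*π = π by ring] using this
      rw [e1, e2]; ring
    rw [intervalIntegral.integral_add (hcXW.intervalIntegrable _ _)
      (hcGZ.intervalIntegrable _ _)] at hFTC
    rw [intervalIntegral.integral_neg]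
    rw [hbd] at hFTC
    linarith
  -- the full value computation
  have hVal : (∫ z in S, phi2 (Gf E (t, z.2, z.1)) (Tf E (t, z.2, z.1))
        ∂((volume : Measure ℝ).prod volume))
      = ∫ x in (-π)..π,
          (‖deriv (fun y => E t y b) x‖ ^ 2 - ‖deriv (fun y => E t y a) x‖ ^ 2) := by
    have hVint : IntegrableOn
        (fun z : ℝ×ℝ => phi2 (Gf E (t, z.2, z.1)) (Tf E (t, z.2, z.1))) S
        ((volume : Measure ℝ).prod volume) := by
      rw [hS]
      exact integrableOn_rect (phi2_cont.comp ((hGc.comp (hmap t)).prodMk (hTc.comp (hmap t))))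
    rw [hS] at hVint ⊢
    rw [MeasureTheory.setIntegral_prod _ hVint]
    have step2 : (∫ p in Set.Ioc a b, ∫ x in Set.Ioc (-π) π,
          phi2 (Gf E (t,x,p)) (Tf E (t,x,p)))
        = ∫ p in Set.Ioc a b, ∫ x in Set.Ioc (-π) π,
          phi2 (Xf E (t,x,p)) (Wf E (t,x,p)) :=
      setIntegral_congr_fun measurableSet_Ioc
        (fun p hp => inner_eq p (Set.Ioc_subset_Icc_self hp))
    rw [step2]
    have hswap : (∫ p in Set.Ioc a b, ∫ x in Set.Ioc (-π) π,
          phi2 (Xf E (t,x,p)) (Wf E (t,x,p)))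
        = ∫ x in Set.Ioc (-π) π, ∫ p in Set.Ioc a b,
          phi2 (Xf E (t,x,p)) (Wf E (t,x,p)) := by
      apply MeasureTheory.integral_integral_swap
      rw [Function.uncurry_def, Measure.prod_restrict]
      exact integrableOn_rect (phi2_cont.comp ((hXc.comp (hmap t)).prodMk (hWc.comp (hmap t))))
    rw [hswap]
    have ftcP : ∀ x : ℝ, (∫ p in Set.Ioc a b, phi2 (Xf E (t,x,p)) (Wf E (t,x,p)))
        = ‖Xf E (t,x,b)‖ ^ 2 - ‖Xf E (t,x,a)‖ ^ 2 := by
      intro x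
      rw [← intervalIntegral.integral_of_le hab]
      have hcP : Continuous fun p => phi2 (Xf E (t,x,p)) (Wf E (t,x,p)) :=
        phi2_cont.comp ((hXc.comp (by fun_prop)).prodMk (hWc.comp (by fun_prop)))
      refine intervalIntegral.integral_eq_sub_of_hasDerivAt
        (f := fun p => ‖Xf E (t,x,p)‖ ^ 2) (fun p _ => ?_)
        (hcP.intervalIntegrable _ _)
      have h := hasDerivAt_normSq (hasDerivAt_sliceP hXd t x p)
      rwa [pdvPX hsm] at h
    rw [← intervalIntegral.integral_of_le hcd]
    rw [show (fun x => ∫ p in Set.Ioc a b, phi2 (Xf E (t,x,p)) (Wf E (t,x,p)))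
        = fun x => ‖Xf E (t,x,b)‖ ^ 2 - ‖Xf E (t,x,a)‖ ^ 2 from funext ftcP]
    refine intervalIntegral.integral_congr fun x _ => ?_
    rw [derivX hsm, derivX hsm]
  -- conclusion
  have hfun : (fun τ => ∫ p in a..b, ∫ x in (-π)..π, ‖E τ x p‖ ^ 2)
      = fun τ => ∫ z, ‖Gf E (τ, z.2, z.1)‖ ^ 2
          ∂(((volume : Measure ℝ).prod volume).restrict S) :=
    funext fun τ => eqF τ
  rw [hfun, ← hVal]
  exact hder
end

section
/- Let f : ℝ → ℂ be integrable and let t, T, x, p ∈ ℝ. Then ∫_ℝ ∫_ℝ e^{-i(xη + pξ)} e^{-i ξ η² (t-T)} · f(η)/(π(1+ξ²)) dξ dη = ∫_ℝ e^{-|p + η²(t-T)|} f(η) e^{-i x η} dη. -/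
/-!
For fixed `η` the inner integrand factors as `e^{-ixη} f(η)` times `e^{iaξ}/(π(1+ξ²))` with
`a = -(p + η²(t-T))`, so the two sides already agree for the inner integrals. The Cauchy-kernel
integral `∫ e^{iaξ}/(π(1+ξ²)) dξ = e^{-|a|}` comes from Fourier inversion: the Fourier transform
of `e^{-2π|x|}` is exactly `1/(π(1+ξ²))`, and inverting at `a/(2π)` gives it.
-/

open MeasureTheory Real Set FourierTransform

theorem integrable_exp_neg_mul_abs {c : ℝ} (hc : 0 < c) :
    Integrable fun x : ℝ => Real.exp (-c * |x|) := by
  rw [← integrableOn_univ, ← Iic_union_Ioi (a := (0 : ℝ))]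
  refine IntegrableOn.union ?_ ?_
  · refine (integrableOn_exp_mul_Iic hc 0).congr_fun (fun x hx => ?_) measurableSet_Iic
    rw [abs_of_nonpos hx, neg_mul_neg]
  · refine (integrableOn_exp_mul_Ioi (neg_lt_zero.mpr hc) 0).congr_fun (fun x hx => ?_)
      measurableSet_Ioi
    rw [abs_of_pos hx]

theorem fourier_exp_neg_mul_abs {c : ℝ} (hc : 0 < c) (ξ : ℝ) :
    𝓕 (fun x : ℝ => (Real.exp (-c * |x|) : ℂ)) ξ = 2 * c / (c ^ 2 + (2 * π * ξ) ^ 2) := by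
  set b : ℂ := 2 * π * ξ * Complex.I
  have h_integrand (v : ℝ) :
      Complex.exp (↑(-2 * π * v * ξ) * Complex.I) • (Real.exp (-c * |v|) : ℂ) =
        Complex.exp ((-c * |v| : ℝ) - b * v) := by
    rw [smul_eq_mul, Complex.ofReal_exp, ← Complex.exp_add]
    push_cast [b]
    ring_nf
  have h_int : Integrable fun v : ℝ => Complex.exp ((-c * |v| : ℝ) - b * v) :=
    (integrable_exp_neg_mul_abs hc).mono' (by fun_prop)
      (.of_forall fun v => by simp [Complex.norm_exp, b])
  have h_Ioi : ∫ v in Ioi (0 : ℝ), Complex.exp ((-c * |v| : ℝ) - b * v) = 1 / (c + b) := by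
    have h_re : (-c - b).re < 0 := by simpa [b] using hc
    rw [setIntegral_congr_fun measurableSet_Ioi (g := fun v : ℝ => Complex.exp ((-c - b) * v))
      fun v hv => by rw [abs_of_pos hv]; push_cast; ring_nf,
      integral_exp_mul_complex_Ioi h_re, Complex.ofReal_zero, mul_zero, Complex.exp_zero,
      ← neg_add', div_neg, neg_div, neg_neg]
  have h_Iic : ∫ v in Iic (0 : ℝ), Complex.exp ((-c * |v| : ℝ) - b * v) = 1 / (c - b) := by
    have h_re : 0 < (c - b).re := by simpa [b] using hc
    rw [setIntegral_congr_fun measurableSet_Iic (g := fun v : ℝ => Complex.exp ((c - b) * v))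
      fun v hv => by rw [abs_of_nonpos hv]; push_cast; ring_nf,
      integral_exp_mul_complex_Iic h_re, Complex.ofReal_zero, mul_zero, Complex.exp_zero]
  have h_plus : (c : ℂ) + b ≠ 0 := Complex.ne_zero_of_re_pos (by simpa [b] using hc)
  have h_minus : (c : ℂ) - b ≠ 0 := Complex.ne_zero_of_re_pos (by simpa [b] using hc)
  have h_factor : (c : ℂ) ^ 2 + (2 * π * ξ) ^ 2 = (c - b) * (c + b) := by
    linear_combination (2 * π * ξ : ℂ) ^ 2 * Complex.I_sq
  simp_rw [Real.fourier_real_eq_integral_exp_smul, h_integrand]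
  rw [← intervalIntegral.integral_Iic_add_Ioi h_int.integrableOn h_int.integrableOn, h_Ioi, h_Iic,
    h_factor]
  field_simp
  ring

theorem fourier_exp_neg_two_pi_mul_abs (ξ : ℝ) :
    𝓕 (fun x : ℝ => (Real.exp (-(2 * π) * |x|) : ℂ)) ξ = 1 / (π * (1 + (ξ : ℂ) ^ 2)) := by
  have hπ : (π : ℂ) ≠ 0 := Complex.ofReal_ne_zero.mpr pi_ne_zero
  have hξ : 1 + (ξ : ℂ) ^ 2 ≠ 0 := by exact_mod_cast (by positivity : (1 + ξ ^ 2 : ℝ) ≠ 0)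
  rw [fourier_exp_neg_mul_abs two_pi_pos]
  push_cast
  field_simp

theorem integral_exp_mul_I_div_pi_one_add_sq (a : ℝ) :
    ∫ ξ : ℝ, Complex.exp (a * ξ * Complex.I) / (π * (1 + (ξ : ℂ) ^ 2)) = (Real.exp (-|a|) : ℂ) := by
  set g : ℝ → ℂ := fun x => Real.exp (-(2 * π) * |x|)
  have hg_fourier : 𝓕 g = fun ξ : ℝ => 1 / (π * (1 + (ξ : ℂ) ^ 2)) :=
    funext fourier_exp_neg_two_pi_mul_abs
  have hF_int : Integrable (𝓕 g) := by
    rw [hg_fourier]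
    refine (integrable_inv_one_add_sq.ofReal.const_mul (π : ℂ)⁻¹).congr (.of_forall fun ξ => ?_)
    -- `Integrable.ofReal` casts through `RCLike`; restate with `Complex.ofReal` for `push_cast`
    change (π : ℂ)⁻¹ * (((1 + ξ ^ 2)⁻¹ : ℝ) : ℂ) = _
    push_cast
    rw [← mul_inv, one_div]
  have hg_cont : Continuous g := by fun_prop
  have h_inversion := (integrable_exp_neg_mul_abs two_pi_pos).ofReal.fourierInv_fourier_eq hF_int
    (hg_cont.continuousAt (x := a / (2 * π)))
  rw [Real.fourierInv_eq_fourier_neg, hg_fourier, Real.fourier_real_eq_integral_exp_smul]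
    at h_inversion
  convert h_inversion using 1
  · congr 1
    funext ξ
    rw [smul_eq_mul, mul_one_div]
    congr 3
    push_cast
    field_simp
  · rw [show g (a / (2 * π)) = Real.exp (-(2 * π) * |a / (2 * π)|) from rfl, abs_div,
      abs_of_pos two_pi_pos, neg_mul, mul_div_cancel₀ _ two_pi_pos.ne']

theorem double_fourier_representation_general
    (f : ℝ → ℂ) (t T x p : ℝ) :
    (∫ η : ℝ, ∫ ξ : ℝ,
        Complex.exp (-Complex.I * (x * η + p * ξ)) *
          Complex.exp (-Complex.I * ξ * η ^ 2 * (t - T)) *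
            (f η / ((π : ℂ) * (1 + (ξ : ℂ) ^ 2)))) =
      ∫ η : ℝ, (Real.exp (-|p + η ^ 2 * (t - T)|) : ℂ) * f η *
        Complex.exp (-Complex.I * x * η) := by
  refine integral_congr_ae (.of_forall fun η => ?_)
  set a : ℝ := -(p + η ^ 2 * (t - T))
  have h_integrand (ξ : ℝ) :
      Complex.exp (-Complex.I * (x * η + p * ξ)) * Complex.exp (-Complex.I * ξ * η ^ 2 * (t - T)) *
          (f η / ((π : ℂ) * (1 + (ξ : ℂ) ^ 2))) =
        Complex.exp (-Complex.I * x * η) * f η *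
          (Complex.exp (a * ξ * Complex.I) / (π * (1 + (ξ : ℂ) ^ 2))) := by
    have h_exp : Complex.exp (-Complex.I * (x * η + p * ξ)) *
        Complex.exp (-Complex.I * ξ * η ^ 2 * (t - T)) =
          Complex.exp (-Complex.I * x * η) * Complex.exp (a * ξ * Complex.I) := by
      rw [← Complex.exp_add, ← Complex.exp_add]
      push_cast [a]
      ring_nf
    rw [h_exp]
    ring
  simp_rw [h_integrand, integral_const_mul, integral_exp_mul_I_div_pi_one_add_sq, a, abs_neg]
  ring

/-- The double inverse Fourier integral representation of the Schrödingerised solution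
collapses to the single-integral representation:
`∫∫ e^{-i(xη+pξ)} e^{-iξη²(t-T)} f(η)/(π(1+ξ²)) dξ dη
  = ∫ e^{-|p+η²(t-T)|} f(η) e^{-ixη} dη`. -/
theorem double_fourier_representation
    (f : ℝ → ℂ) (hf : Integrable f) (t T x p : ℝ) :
    (∫ η : ℝ, ∫ ξ : ℝ,
        Complex.exp (-Complex.I * (x * η + p * ξ)) *
          Complex.exp (-Complex.I * ξ * η ^ 2 * (t - T)) *
            (f η / ((π : ℂ) * (1 + (ξ : ℂ) ^ 2)))) =
      ∫ η : ℝ, (Real.exp (-|p + η ^ 2 * (t - T)|) : ℂ) * f η *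
        Complex.exp (-Complex.I * x * η) :=
  double_fourier_representation_general f t T x p
end

section
/- Define g : ℝ → ℝ by g(p) = (-3 + 3e^{-1}) p³ + (-5 + 4e^{-1}) p² - p + 1 for p ∈ (-1, 0), and g(p) = e^{-|p|} for p ∉ (-1, 0). Then g is continuously differentiable on ℝ (g ∈ C¹(ℝ)), with g(0) = 1, g'(0) = -1, g(-1) = e^{-1}, and g'(-1) = e^{-1}. -/
/-!
On `(-1, 0)` the function is the cubic Hermite interpolant that matches the value and the slope
of `e^{p}` at `-1` and of `e^{-p}` at `0`. Gluing two `C¹` functions at a point where both their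
values and their derivatives agree gives a `C¹` function, and the function is obtained by two
such gluings: the cubic with `e^{-p}` at `0`, then `e^{p}` with the result at `-1`.
-/

open Real Set Filter

section Gluing

variable {f₁ f₂ : ℝ → ℝ} {a : ℝ}

theorem HasDerivAt.ite_le {d : ℝ} (h₁ : HasDerivAt f₁ d a) (h₂ : HasDerivAt f₂ d a)
    (ha : f₁ a = f₂ a) : HasDerivAt (fun x => if x ≤ a then f₁ x else f₂ x) d a := by
  have hleft : HasDerivWithinAt (fun x => if x ≤ a then f₁ x else f₂ x) d (Iic a) a :=
    h₁.hasDerivWithinAt.congr (fun x hx => if_pos hx) (if_pos le_rfl)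
  have hright : HasDerivWithinAt (fun x => if x ≤ a then f₁ x else f₂ x) d (Ici a) a := by
    refine h₂.hasDerivWithinAt.congr (fun x hx => ?_) (by simp [ha])
    split_ifs with hxa
    · rw [le_antisymm hxa hx, ha]
    · rfl
  simpa only [Iic_union_Ici, hasDerivWithinAt_univ] using hleft.union hright

theorem ContDiff.ite_le (h₁ : ContDiff ℝ 1 f₁) (h₂ : ContDiff ℝ 1 f₂) (ha : f₁ a = f₂ a)
    (hd : deriv f₁ a = deriv f₂ a) :
    ContDiff ℝ 1 (fun x => if x ≤ a then f₁ x else f₂ x) := by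
  have hdiff₁ := h₁.differentiable one_ne_zero
  have hdiff₂ := h₂.differentiable one_ne_zero
  have hderiv : ∀ x, HasDerivAt (fun x => if x ≤ a then f₁ x else f₂ x)
      (if x ≤ a then deriv f₁ x else deriv f₂ x) x := by
    intro x
    rcases lt_trichotomy x a with hx | rfl | hx
    · rw [if_pos hx.le]
      refine (hdiff₁ x).hasDerivAt.congr_of_eventuallyEq ?_
      filter_upwards [Iio_mem_nhds hx] with y hy using if_pos (le_of_lt hy)
    · rw [if_pos le_rfl]
      exact (hdiff₁ x).hasDerivAt.ite_le (hd ▸ (hdiff₂ x).hasDerivAt) ha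
    · rw [if_neg hx.not_ge]
      refine (hdiff₂ x).hasDerivAt.congr_of_eventuallyEq ?_
      filter_upwards [Ioi_mem_nhds hx] with y hy using if_neg (not_le.mpr hy)
  refine contDiff_one_iff_deriv.mpr ⟨fun x => (hderiv x).differentiableAt, ?_⟩
  rw [funext fun x => (hderiv x).deriv]
  exact Continuous.if_le (h₁.continuous_deriv le_rfl) (h₂.continuous_deriv le_rfl)
    continuous_id continuous_const fun x hx => by rw [hx, hd]

end Gluing

noncomputable def hermiteCubic (p : ℝ) : ℝ :=
  (-3 + 3 * exp (-1)) * p ^ 3 + (-5 + 4 * exp (-1)) * p ^ 2 - p + 1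

theorem hasDerivAt_hermiteCubic (p : ℝ) :
    HasDerivAt hermiteCubic
      (3 * (-3 + 3 * exp (-1)) * p ^ 2 + 2 * (-5 + 4 * exp (-1)) * p - 1) p := by
  refine (((((hasDerivAt_pow 3 p).const_mul (-3 + 3 * exp (-1))).fun_add
    ((hasDerivAt_pow 2 p).const_mul (-5 + 4 * exp (-1)))).fun_sub
    (hasDerivAt_id' p)).add_const 1).congr_deriv ?_
  norm_num
  ring

theorem contDiff_hermiteCubic : ContDiff ℝ 1 hermiteCubic := by
  unfold hermiteCubic
  fun_prop

theorem hermiteCubic_zero : hermiteCubic 0 = 1 := by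
  simp [hermiteCubic]

theorem hermiteCubic_neg_one : hermiteCubic (-1) = exp (-1) := by
  simp only [hermiteCubic]
  ring

theorem hasDerivAt_hermiteCubic_zero : HasDerivAt hermiteCubic (-1) 0 := by
  simpa using hasDerivAt_hermiteCubic 0

theorem hasDerivAt_hermiteCubic_neg_one : HasDerivAt hermiteCubic (exp (-1)) (-1) := by
  convert hasDerivAt_hermiteCubic (-1) using 1
  ring

theorem hasDerivAt_exp_neg (p : ℝ) : HasDerivAt (fun p => exp (-p)) (-exp (-p)) p := by
  simpa using (hasDerivAt_neg p).exp

noncomputable def hermiteGlueRight (p : ℝ) : ℝ :=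
  if p ≤ 0 then hermiteCubic p else exp (-p)

noncomputable def hermiteProfile (p : ℝ) : ℝ :=
  if p ≤ -1 then exp p else hermiteGlueRight p

theorem contDiff_hermiteGlueRight : ContDiff ℝ 1 hermiteGlueRight :=
  contDiff_hermiteCubic.ite_le (contDiff_exp.comp contDiff_neg) (by simp [hermiteCubic_zero])
    (hasDerivAt_hermiteCubic_zero.deriv.trans (by simpa using (hasDerivAt_exp_neg 0).deriv.symm))

theorem hasDerivAt_hermiteGlueRight_zero : HasDerivAt hermiteGlueRight (-1) 0 :=
  hasDerivAt_hermiteCubic_zero.ite_le (by simpa using hasDerivAt_exp_neg 0)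
    (by simp [hermiteCubic_zero])

theorem hasDerivAt_hermiteGlueRight_neg_one :
    HasDerivAt hermiteGlueRight (exp (-1)) (-1) :=
  hasDerivAt_hermiteCubic_neg_one.congr_of_eventuallyEq <| by
    filter_upwards [Iio_mem_nhds (show (-1 : ℝ) < 0 by norm_num)] with p hp using if_pos hp.le

theorem hermiteGlueRight_neg_one : hermiteGlueRight (-1) = exp (-1) := by
  simp [hermiteGlueRight, hermiteCubic_neg_one]

theorem contDiff_hermiteProfile : ContDiff ℝ 1 hermiteProfile :=
  contDiff_exp.ite_le contDiff_hermiteGlueRight hermiteGlueRight_neg_one.symm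
    ((hasDerivAt_exp (-1)).deriv.trans hasDerivAt_hermiteGlueRight_neg_one.deriv.symm)

theorem hasDerivAt_hermiteProfile_zero : HasDerivAt hermiteProfile (-1) 0 :=
  hasDerivAt_hermiteGlueRight_zero.congr_of_eventuallyEq <| by
    filter_upwards [Ioi_mem_nhds (show (-1 : ℝ) < 0 by norm_num)] with p hp using
      if_neg (not_le.mpr hp)

theorem hasDerivAt_hermiteProfile_neg_one : HasDerivAt hermiteProfile (exp (-1)) (-1) :=
  (hasDerivAt_exp (-1)).ite_le hasDerivAt_hermiteGlueRight_neg_one hermiteGlueRight_neg_one.symm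

theorem hermiteProfile_of_mem {p : ℝ} (hp : p ∈ Ioo (-1) 0) :
    hermiteProfile p = hermiteCubic p := by
  simp [hermiteProfile, hermiteGlueRight, not_le.mpr hp.1, hp.2.le]

theorem hermiteProfile_of_notMem {p : ℝ} (hp : p ∉ Ioo (-1) 0) :
    hermiteProfile p = exp (-|p|) := by
  unfold hermiteProfile hermiteGlueRight
  split_ifs with h₁ h₂
  · rw [abs_of_nonpos (by linarith), neg_neg]
  · obtain rfl : p = 0 := le_antisymm h₂ (not_lt.mp fun h => hp ⟨not_le.mp h₁, h⟩)
    simp [hermiteCubic_zero]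
  · rw [abs_of_pos (not_le.mp h₂)]

/-- The smooth (`C¹`) initialisation of the Schrödingerised equation: the cubic
Hermite interpolant glued to `e^{-|p|}` on `(-1,0)` produces a continuously
differentiable profile matching `e^{-|p|}` outside `(-1,0)`. -/
theorem smooth_initialisation_C1
    (g : ℝ → ℝ)
    (hg_in : ∀ p ∈ Set.Ioo (-1 : ℝ) 0,
      g p = (-3 + 3 * Real.exp (-1)) * p ^ 3 + (-5 + 4 * Real.exp (-1)) * p ^ 2 - p + 1)
    (hg_out : ∀ p : ℝ, p ∉ Set.Ioo (-1 : ℝ) 0 → g p = Real.exp (-|p|)) :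
    ContDiff ℝ 1 g ∧ g 0 = 1 ∧ deriv g 0 = -1 ∧
      g (-1) = Real.exp (-1) ∧ deriv g (-1) = Real.exp (-1) := by
  obtain rfl : g = hermiteProfile := by
    funext p
    by_cases hp : p ∈ Ioo (-1) 0
    · rw [hg_in p hp, hermiteProfile_of_mem hp, hermiteCubic]
    · rw [hg_out p hp, hermiteProfile_of_notMem hp]
  refine ⟨contDiff_hermiteProfile, ?_, hasDerivAt_hermiteProfile_zero.deriv, ?_,
    hasDerivAt_hermiteProfile_neg_one.deriv⟩
  · simpa using hermiteProfile_of_notMem (p := 0) (by simp)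
  · simpa using hermiteProfile_of_notMem (p := -1) (by simp)
end
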